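/- arXiv:1007.0804 — 11 statements merged into one kernel-verified Lean document; each statement's English description precedes it below -/
import Mathlib

section
/- Let f be an overlap representation of a graph G and S a set of elements. Then the assignment v ↦ f(v) \ S is an overlap representation of G if and only if S does not contain f(u) ∩ f(v), f(u) \ f(v), or f(v) \ f(u) for any edge uv of G. -/
/-- An overlap representation of `G`: vertices are adjacent iff their assigned
finite sets intersect and neither is contained in the other. -/
def IsOverlapRep {V : Type*} (G : SimpleGraph V) (f : V → Finset ℕ) : Prop :=
  ∀ u v : V, u ≠ v →
    (G.Adj u v ↔ ((f u ∩ f v).Nonempty ∧ ¬ f u ⊆ f v ∧ ¬ f v ⊆ f u))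

/-- A pure overlap representation: adjacency iff intersection, and no assigned
set contains another. -/
def IsPureOverlapRep {V : Type*} (G : SimpleGraph V) (f : V → Finset ℕ) : Prop :=
  (∀ u v : V, u ≠ v → (G.Adj u v ↔ (f u ∩ f v).Nonempty)) ∧
  (∀ u v : V, u ≠ v → ¬ f u ⊆ f v)

/-- The size of a representation: cardinality of the union of the assigned sets. -/
noncomputable def repSize {V : Type*} (f : V → Finset ℕ) : ℕ :=
  (⋃ v, (f v : Set ℕ)).ncard

/-- The overlap number of `G`. -/
noncomputable def overlapNumber {V : Type*} (G : SimpleGraph V) : ℕ :=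
  sInf {n | ∃ f : V → Finset ℕ, IsOverlapRep G f ∧ repSize f = n}

/-- The pure overlap number of `G`. -/
noncomputable def pureOverlapNumber {V : Type*} (G : SimpleGraph V) : ℕ :=
  sInf {n | ∃ f : V → Finset ℕ, IsPureOverlapRep G f ∧ repSize f = n}

/-!
Removing `S` from both sets replaces `A ∩ B`, `A \ B` and `B \ A` by their parts outside `S`, so
two sets still overlap after the removal iff none of these three pieces lies inside `S`. Removing
elements can destroy overlaps but never create them, so non-edges stay non-edges.
-/

theorem sdiff_le_sdiff_right_iff {α : Type*} [GeneralizedBooleanAlgebra α] {a b c : α} :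
    a \ c ≤ b \ c ↔ a \ b ≤ c := by
  rw [le_sdiff, sdiff_le_iff, sdiff_le_iff, sup_comm]
  simp only [disjoint_sdiff_self_left, and_true]

namespace Finset

variable {α : Type*} [DecidableEq α]

def Overlaps (A B : Finset α) : Prop :=
  (A ∩ B).Nonempty ∧ ¬ A ⊆ B ∧ ¬ B ⊆ A

theorem overlaps_sdiff_iff {A B S : Finset α} :
    Overlaps (A \ S) (B \ S) ↔ ¬ A ∩ B ⊆ S ∧ ¬ A \ B ⊆ S ∧ ¬ B \ A ⊆ S := by
  have hinter : A \ S ∩ (B \ S) = (A ∩ B) \ S := inf_sdiff.symm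
  rw [Overlaps, hinter, sdiff_nonempty, sdiff_le_sdiff_right_iff, sdiff_le_sdiff_right_iff]

theorem Overlaps.of_sdiff {A B S : Finset α} (h : Overlaps (A \ S) (B \ S)) :
    Overlaps A B :=
  ⟨h.1.mono (inter_subset_inter sdiff_subset sdiff_subset),
    fun hAB => h.2.1 (sdiff_subset_sdiff hAB subset_rfl),
    fun hBA => h.2.2 (sdiff_subset_sdiff hBA subset_rfl)⟩

end Finset

open Finset

theorem isOverlapRep_iff {V : Type*} {G : SimpleGraph V} {f : V → Finset ℕ} :
    IsOverlapRep G f ↔ ∀ u v : V, u ≠ v → (G.Adj u v ↔ Overlaps (f u) (f v)) :=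
  Iff.rfl

theorem stmt_1 {V : Type*} (G : SimpleGraph V) (f : V → Finset ℕ)
    (hf : IsOverlapRep G f) (S : Finset ℕ) :
    IsOverlapRep G (fun v => f v \ S) ↔
      ∀ u v : V, G.Adj u v →
        ¬ (f u ∩ f v ⊆ S) ∧ ¬ (f u \ f v ⊆ S) ∧ ¬ (f v \ f u ⊆ S) := by
  rw [isOverlapRep_iff] at hf ⊢
  refine ⟨fun h u v huv => overlaps_sdiff_iff.1 ((h u v huv.ne).1 huv),
    fun h u v hne => ⟨fun huv => overlaps_sdiff_iff.2 (h u v huv),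
      fun hov => (hf u v hne).2 (Overlaps.of_sdiff hov)⟩⟩
end

section
/- Let v be a vertex of a graph G such that N(v) is an independent set and every vertex in N(v) has degree at least 2 in G. Let f be an overlap representation of G, let f' be its restriction to G − v, and suppose {a,b} is f'-uniform (every set assigned to a vertex of G − v contains both a and b or neither). Then either v ↦ f(v)\{a} (applied to all vertices) or v ↦ f(v)\{b} is an overlap representation of G. -/
/-!
Off `v`, the elements `a` and `b` are twins, so deleting either of them changes no overlap
between sets `f u`, `f w` with `u, w ≠ v`; only pairs `(v, x)` with `x ∈ N(v)` can break.
If `a` and `b` are also twins in `f v`, nothing breaks. Otherwise say `a ∈ f v`, `b ∉ f v`.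
Deleting `b` breaks `(v, y)` only if `f y ⊆ f v ∪ {b}` with `b ∈ f y`, and deleting `a`
breaks `(v, x)` only if `f v ∩ f x = {a}` or `f v \ {a} ⊆ f x`. Since `y` has a neighbour
other than `v`, `f y` has an element `d ∉ {a, b}`, which lies in `f v`. In either case
`f y ⊄ f x` while `f x ∩ f y ≠ ∅`, so `x ≠ y` and, `x` and `y` being non-adjacent,
`f x ⊆ f y`; this contradicts the overlap of `f v` and `f x`.
-/

open Finset

/-- `IsOverlapRep G f` unfolds to `∀ u w, u ≠ w → (G.Adj u w ↔ (f u).Overlap (f w))`. -/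
def Finset.Overlap {α : Type*} [DecidableEq α] (s t : Finset α) : Prop :=
  (s ∩ t).Nonempty ∧ ¬ s ⊆ t ∧ ¬ t ⊆ s

namespace Finset

variable {α : Type*} [DecidableEq α] {s t r : Finset α} {a b : α}

theorem Overlap.symm (h : s.Overlap t) : t.Overlap s :=
  ⟨inter_comm s t ▸ h.1, h.2.2, h.2.1⟩

theorem Overlap.of_sdiff (h : (s \ r).Overlap (t \ r)) : s.Overlap t :=
  ⟨h.1.mono (inter_subset_inter sdiff_subset sdiff_subset),
    fun hst => h.2.1 (sdiff_subset_sdiff hst le_rfl),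
    fun hts => h.2.2 (sdiff_subset_sdiff hts le_rfl)⟩

theorem mem_iff_mem_of_pair_subset_or_disjoint (h : {a, b} ⊆ s ∨ Disjoint {a, b} s) :
    a ∈ s ↔ b ∈ s := by
  simp only [insert_subset_iff, singleton_subset_iff, disjoint_insert_left,
    disjoint_singleton_left] at h
  tauto

theorem subset_of_sdiff_singleton_subset (hab : a ≠ b) (hs : a ∈ s → b ∈ s)
    (ht : b ∈ t → a ∈ t) (h : s \ {a} ⊆ t \ {a}) : s ⊆ t := by
  intro e he
  by_cases hea : e = a
  · subst hea
    exact ht (mem_sdiff.1 (h (mem_sdiff.2 ⟨hs he, by simpa using hab.symm⟩))).1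
  · exact (mem_sdiff.1 (h (mem_sdiff.2 ⟨he, by simpa using hea⟩))).1

theorem overlap_sdiff_singleton_iff (hab : a ≠ b) (hs : a ∈ s ↔ b ∈ s)
    (ht : a ∈ t ↔ b ∈ t) :
    (s \ {a}).Overlap (t \ {a}) ↔ s.Overlap t := by
  refine ⟨Overlap.of_sdiff, fun ⟨⟨e, he⟩, hst, hts⟩ => ⟨?_, ?_, ?_⟩⟩
  · rw [mem_inter] at he
    by_cases hea : e = a
    · subst hea
      exact ⟨b, by simp [hs.1 he.1, ht.1 he.2, hab.symm]⟩
    · exact ⟨e, by simp [he.1, he.2, hea]⟩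
  · exact mt (subset_of_sdiff_singleton_subset hab hs.1 ht.2) hst
  · exact mt (subset_of_sdiff_singleton_subset hab ht.1 hs.2) hts

theorem Overlap.exists_mem_ne_ne (h : s.Overlap t) (ht : a ∈ t ↔ b ∈ t) :
    ∃ d ∈ s, d ≠ a ∧ d ≠ b := by
  by_cases hat : a ∈ t
  · obtain ⟨d, hds, hdt⟩ := not_subset.1 h.2.1
    exact ⟨d, hds, fun hda => hdt (hda ▸ hat), fun hdb => hdt (hdb ▸ ht.1 hat)⟩
  · obtain ⟨d, hd⟩ := h.1
    rw [mem_inter] at hd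
    exact ⟨d, hd.1, fun hda => hat (hda ▸ hd.2), fun hdb => hat (ht.2 (hdb ▸ hd.2))⟩

theorem inter_subset_or_sdiff_subset_of_not_overlap_sdiff (h : s.Overlap t) (ha : a ∈ s)
    (hfail : ¬ (s \ {a}).Overlap (t \ {a})) : s ∩ t ⊆ {a} ∨ s \ {a} ⊆ t := by
  simp only [Overlap, not_and_or, not_not] at hfail
  rcases hfail with hempty | hst | hts
  · left
    intro e he
    rw [mem_inter] at he
    by_contra hea
    exact hempty ⟨e, by simp [he.1, he.2, hea]⟩
  · exact Or.inr (hst.trans sdiff_subset)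
  · obtain ⟨e, het, hes⟩ := not_subset.1 h.2.2
    have hea : e ≠ a := fun hea => hes (hea ▸ ha)
    exact absurd (mem_sdiff.1 (hts (by simp [het, hea]))).1 hes

theorem sdiff_singleton_subset_of_not_overlap_sdiff (h : s.Overlap t) (hb : b ∉ s)
    (hfail : ¬ s.Overlap (t \ {b})) : t \ {b} ⊆ s := by
  by_contra hts
  refine hfail ⟨?_, fun hst => h.2.1 (hst.trans sdiff_subset), hts⟩
  obtain ⟨e, he⟩ := h.1
  rw [mem_inter] at he
  have heb : e ≠ b := fun heb => hb (heb ▸ he.1)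
  exact ⟨e, by simp [he.1, he.2, heb]⟩

theorem subset_of_not_overlap (h : ¬ s.Overlap t) (hst : (s ∩ t).Nonempty) (hts : ¬ t ⊆ s) :
    s ⊆ t := by
  unfold Overlap at h
  tauto

end Finset

namespace IsOverlapRep

variable {V : Type*} {G : SimpleGraph V} {f : V → Finset ℕ} {u w v : V} {a b : ℕ}

theorem overlap (hf : IsOverlapRep G f) (h : G.Adj u w) : (f u).Overlap (f w) :=
  (hf u w h.ne).1 h

theorem not_overlap (hf : IsOverlapRep G f) (huw : u ≠ w) (h : ¬ G.Adj u w) :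
    ¬ (f u).Overlap (f w) :=
  fun ho => h ((hf u w huw).2 ho)

theorem sdiff_singleton (hf : IsOverlapRep G f) (hab : a ≠ b)
    (htwin : ∀ u, u ≠ v → (a ∈ f u ↔ b ∈ f u))
    (hv : ∀ x, G.Adj v x → (f v \ {a}).Overlap (f x \ {a})) :
    IsOverlapRep G (fun x => f x \ {a}) := by
  intro u w huw
  refine ⟨fun hadj => ?_, fun ho => (hf u w huw).2 (Finset.Overlap.of_sdiff ho)⟩
  by_cases hu : u = v
  · subst hu
    exact hv w hadj
  by_cases hw : w = v
  · subst hw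
    exact (hv u hadj.symm).symm
  exact (overlap_sdiff_singleton_iff hab (htwin u hu) (htwin w hw)).2 (hf.overlap hadj)

theorem exists_mem_ne_ne (hf : IsOverlapRep G f) {x : V}
    (hdeg : ∃ y z : V, y ≠ z ∧ G.Adj x y ∧ G.Adj x z)
    (htwin : ∀ u, u ≠ v → (a ∈ f u ↔ b ∈ f u)) :
    ∃ d ∈ f x, d ≠ a ∧ d ≠ b := by
  obtain ⟨y, z, hyz, hxy, hxz⟩ := hdeg
  obtain ⟨w, hwv, hxw⟩ : ∃ w, w ≠ v ∧ G.Adj x w := by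
    by_cases hyv : y = v
    · exact ⟨z, fun hzv => hyz (hyv.trans hzv.symm), hxz⟩
    · exact ⟨y, hyv, hxy⟩
  exact (hf.overlap hxw).exists_mem_ne_ne (htwin w hwv)

theorem subset_of_not_subset (hf : IsOverlapRep G f)
    (hind : ∀ x ∈ G.neighborSet v, ∀ y ∈ G.neighborSet v, ¬ G.Adj x y)
    {x y : V} (hx : G.Adj v x) (hy : G.Adj v y) (hyx : ¬ f y ⊆ f x)
    (hne : (f x ∩ f y).Nonempty) : f x ⊆ f y := by
  have hxy : x ≠ y := by
    rintro rfl
    exact hyx subset_rfl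
  exact subset_of_not_overlap (hf.not_overlap hxy (hind x hx y hy)) hne hyx

theorem overlap_sdiff_of_not_overlap_sdiff (hf : IsOverlapRep G f)
    (hind : ∀ x ∈ G.neighborSet v, ∀ y ∈ G.neighborSet v, ¬ G.Adj x y)
    (hdeg : ∀ x ∈ G.neighborSet v, ∃ y z : V, y ≠ z ∧ G.Adj x y ∧ G.Adj x z)
    (htwin : ∀ u, u ≠ v → (a ∈ f u ↔ b ∈ f u)) (ha : a ∈ f v) (hb : b ∉ f v)
    {x : V} (hx : G.Adj v x) (hfail : ¬ (f v \ {a}).Overlap (f x \ {a}))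
    (y : V) (hy : G.Adj v y) : (f v \ {b}).Overlap (f y \ {b}) := by
  rw [sdiff_singleton_eq_erase, erase_eq_self.2 hb]
  by_contra hfail'
  have hyS : f y \ {b} ⊆ f v :=
    sdiff_singleton_subset_of_not_overlap_sdiff (hf.overlap hy) hb hfail'
  have hby : b ∈ f y := by
    by_contra hby
    rw [sdiff_singleton_eq_erase, erase_eq_self.2 hby] at hyS
    exact (hf.overlap hy).2.2 hyS
  have hay : a ∈ f y := (htwin y hy.ne').2 hby
  obtain ⟨d, hdy, hda, hdb⟩ := hf.exists_mem_ne_ne (hdeg y hy) htwin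
  have hdS : d ∈ f v := hyS (by simp [hdy, hdb])
  rcases inter_subset_or_sdiff_subset_of_not_overlap_sdiff (hf.overlap hx) ha hfail
    with hE | hI
  · have hax : a ∈ f x := by
      obtain ⟨e, he⟩ := (hf.overlap hx).1
      rw [← mem_singleton.1 (hE he)]
      exact (mem_inter.1 he).2
    have hdx : d ∉ f x := fun hdx => hda (mem_singleton.1 (hE (mem_inter.2 ⟨hdS, hdx⟩)))
    have hxsub := hf.subset_of_not_subset hind hx hy (fun h => hdx (h hdy))
      ⟨a, mem_inter.2 ⟨hax, hay⟩⟩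
    obtain ⟨d', hd'x, hd'a, hd'b⟩ := hf.exists_mem_ne_ne (hdeg x hx) htwin
    have hd'S : d' ∈ f v := hyS (by simp [hxsub hd'x, hd'b])
    exact hd'a (mem_singleton.1 (hE (mem_inter.2 ⟨hd'S, hd'x⟩)))
  · have hax : a ∉ f x := by
      intro hax
      refine (hf.overlap hx).2.1 fun e he => ?_
      by_cases hea : e = a
      · exact hea ▸ hax
      · exact hI (by simp [he, hea])
    have hbx : b ∉ f x := mt (htwin x hx.ne').2 hax
    have hdx : d ∈ f x := hI (by simp [hdS, hda])
    have hxsub := hf.subset_of_not_subset hind hx hy (fun h => hbx (h hby))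
      ⟨d, mem_inter.2 ⟨hdx, hdy⟩⟩
    refine (hf.overlap hx).2.2 fun e he => hyS (mem_sdiff.2 ⟨hxsub he, ?_⟩)
    rintro hb'
    exact hbx (mem_singleton.1 hb' ▸ he)

theorem sdiff_singleton_or_of_mem_of_notMem (hf : IsOverlapRep G f) (hab : a ≠ b)
    (hind : ∀ x ∈ G.neighborSet v, ∀ y ∈ G.neighborSet v, ¬ G.Adj x y)
    (hdeg : ∀ x ∈ G.neighborSet v, ∃ y z : V, y ≠ z ∧ G.Adj x y ∧ G.Adj x z)
    (htwin : ∀ u, u ≠ v → (a ∈ f u ↔ b ∈ f u)) (ha : a ∈ f v) (hb : b ∉ f v) :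
    IsOverlapRep G (fun x => f x \ {a}) ∨ IsOverlapRep G (fun x => f x \ {b}) := by
  by_cases h : ∀ x, G.Adj v x → (f v \ {a}).Overlap (f x \ {a})
  · exact Or.inl (hf.sdiff_singleton hab htwin h)
  · push Not at h
    obtain ⟨x, hx, hfail⟩ := h
    exact Or.inr (hf.sdiff_singleton hab.symm (fun u hu => (htwin u hu).symm)
      (hf.overlap_sdiff_of_not_overlap_sdiff hind hdeg htwin ha hb hx hfail))

theorem sdiff_singleton_of_mem_iff (hf : IsOverlapRep G f) (hab : a ≠ b)
    (htwin : ∀ u, u ≠ v → (a ∈ f u ↔ b ∈ f u)) (hv : a ∈ f v ↔ b ∈ f v) :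
    IsOverlapRep G (fun x => f x \ {a}) :=
  hf.sdiff_singleton hab htwin fun x hx =>
    (overlap_sdiff_singleton_iff hab hv (htwin x hx.ne')).2 (hf.overlap hx)

end IsOverlapRep

theorem stmt_3 {V : Type*} (G : SimpleGraph V) (v : V)
    (hind : ∀ x ∈ G.neighborSet v, ∀ y ∈ G.neighborSet v, ¬ G.Adj x y)
    (hdeg : ∀ x ∈ G.neighborSet v, ∃ y z : V, y ≠ z ∧ G.Adj x y ∧ G.Adj x z)
    (f : V → Finset ℕ) (hf : IsOverlapRep G f)
    (a b : ℕ) (hab : a ≠ b)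
    (hunif : ∀ u : V, u ≠ v → ({a, b} : Finset ℕ) ⊆ f u ∨ Disjoint ({a, b} : Finset ℕ) (f u)) :
    IsOverlapRep G (fun x => f x \ {a}) ∨ IsOverlapRep G (fun x => f x \ {b}) := by
  have htwin : ∀ u, u ≠ v → (a ∈ f u ↔ b ∈ f u) := fun u hu =>
    mem_iff_mem_of_pair_subset_or_disjoint (hunif u hu)
  by_cases ha : a ∈ f v <;> by_cases hb : b ∈ f v
  · exact Or.inl (hf.sdiff_singleton_of_mem_iff hab htwin (iff_of_true ha hb))
  · exact hf.sdiff_singleton_or_of_mem_of_notMem hab hind hdeg htwin ha hb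
  · exact (hf.sdiff_singleton_or_of_mem_of_notMem hab.symm hind hdeg
      (fun u hu => (htwin u hu).symm) hb ha).symm
  · exact Or.inl (hf.sdiff_singleton_of_mem_iff hab htwin (iff_of_false ha hb))
end

section
/- In any overlap representation f of a skeleton T (a tree where every leaf's neighbor has degree 2), at most one leaf of T is nonminimal, i.e., at most one leaf x has f(x) properly containing the set assigned to some other vertex. -/
/-!
If a leaf `x` with neighbor `a` has `f u ⊊ f x`, containment in `f x` propagates along edges
avoiding `x` and `a`: an edge `s t` with `f s ⊆ f x` and `t` not adjacent to `x` forces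
`f t ∩ f x ≠ ∅`, hence `f t ⊆ f x` (the alternative `f x ⊆ f t` would give `f s ⊆ f t`).
Since `a` has degree two, `T - {x, a}` is connected, so every `f v` with `v ∉ {x, a}` lies
in `f x`. Two nonminimal leaves `x ≠ y`, with neighbors `a` and `b`, would then satisfy
`f x = f y`, and with `a ≠ b` also `f a ⊆ f y = f x`, contradicting `x ~ a`; if `a = b`,
the tree is the path `x - a - y` and there is no room for `u`.
-/

open SimpleGraph

lemma Set.exists_eq_pair_of_ncard_eq_two {α : Type*} {s : Set α} {x : α}
    (hs : s.ncard = 2) (hx : x ∈ s) : ∃ y, s = {x, y} := by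
  obtain ⟨c, d, -, rfl⟩ := Set.ncard_eq_two.mp hs
  rcases hx with rfl | rfl
  · exact ⟨d, rfl⟩
  · exact ⟨c, Set.pair_comm _ _⟩

namespace SimpleGraph

variable {V : Type*} {G : SimpleGraph V}

lemma adj_iff_eq_of_neighborSet_eq_singleton {x a v : V} (hx : G.neighborSet x = {a}) :
    G.Adj x v ↔ v = a := by
  rw [← mem_neighborSet, hx, Set.mem_singleton_iff]

lemma Walk.IsPath.eq_start_or_eq_end_of_neighbors_eq {s t m c : V} {p : G.Walk s t}
    (hp : p.IsPath) (hm : m ∈ p.support) (hc : ∀ n ∈ p.support, G.Adj m n → n = c) :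
    m = s ∨ m = t := by
  obtain ⟨i, rfl, hi⟩ := Walk.mem_support_iff_exists_getVert.mp hm
  by_contra! hends
  have hi₀ : i ≠ 0 := fun h => hends.1 (h ▸ p.getVert_zero)
  have hil : i ≠ p.length := fun h => hends.2 (h ▸ p.getVert_length)
  have hprev : G.Adj (p.getVert i) (p.getVert (i - 1)) := by
    simpa [Nat.sub_add_cancel (Nat.pos_of_ne_zero hi₀)] using
      (p.adj_getVert_succ (i := i - 1) (by omega)).symm
  have hnext : G.Adj (p.getVert i) (p.getVert (i + 1)) := p.adj_getVert_succ (by omega)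
  have hsame : p.getVert (i - 1) = p.getVert (i + 1) :=
    (hc _ (p.getVert_mem_support _) hprev).trans (hc _ (p.getVert_mem_support _) hnext).symm
  have := hp.getVert_injOn (by simp only [Set.mem_ofPred_eq]; omega)
    (by simp only [Set.mem_ofPred_eq]; omega) hsame
  omega

lemma Connected.eq_or_eq_or_eq_of_neighborSet_subset_pair (hG : G.Connected) {x y a : V}
    (hx : G.neighborSet x = {a}) (hy : G.neighborSet y = {a}) (ha : G.neighborSet a ⊆ {x, y})
    (v : V) : v = x ∨ v = a ∨ v = y := by
  by_contra! hv
  obtain ⟨p, hp⟩ := hG.preconnected.exists_isPath v a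
  have hadj : G.Adj p.penultimate a := p.adj_penultimate (Walk.not_nil_of_ne hv.2.1)
  have hpen : p.penultimate = x ∨ p.penultimate = y := ha hadj.symm
  have hleaf : G.neighborSet p.penultimate = {a} := by rcases hpen with h | h <;> rwa [h]
  rcases hp.eq_start_or_eq_end_of_neighbors_eq (p.getVert_mem_support _)
      (fun n _ hn => (adj_iff_eq_of_neighborSet_eq_singleton hleaf).mp hn) with h | h
  · rcases hpen with h' | h'
    · exact hv.1 (h.symm.trans h')
    · exact hv.2.2 (h.symm.trans h')
  · exact hadj.ne h

end SimpleGraph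

namespace IsOverlapRep

variable {V : Type*} {T : SimpleGraph V} {f : V → Finset ℕ}

lemma subset_of_adj_of_subset (hf : IsOverlapRep T f) {s t x : V} (hst : T.Adj s t)
    (htx : t ≠ x) (hxt : ¬ T.Adj x t) (hs : f s ⊆ f x) : f t ⊆ f x := by
  obtain ⟨⟨e, he⟩, hst_not, -⟩ := (hf s t hst.ne).mp hst
  rw [Finset.mem_inter] at he
  have hmeet : (f x ∩ f t).Nonempty := ⟨e, Finset.mem_inter.mpr ⟨hs he.1, he.2⟩⟩
  by_contra htx_not
  exact hxt ((hf x t htx.symm).mpr ⟨hmeet, fun hxt' => hst_not (hs.trans hxt'), htx_not⟩)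

lemma subset_of_walk (hf : IsOverlapRep T f) {s t x : V} (p : T.Walk s t)
    (hp : ∀ v ∈ p.support, v ≠ x ∧ ¬ T.Adj x v) (hs : f s ⊆ f x) : f t ⊆ f x := by
  induction p with
  | nil => exact hs
  | cons h p ih =>
    have hv := hp _ (List.mem_cons_of_mem _ p.start_mem_support)
    exact ih (fun v hv' => hp v (List.mem_cons_of_mem _ hv'))
      (hf.subset_of_adj_of_subset h hv.1 hv.2 hs)

lemma subset_of_ssubset_leaf (hf : IsOverlapRep T f) (hT : T.Connected) {x a c u : V}
    (hx : T.neighborSet x = {a}) (ha : T.neighborSet a ⊆ {x, c}) (hu : u ≠ x)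
    (hux : f u ⊂ f x) {v : V} (hvx : v ≠ x) (hva : v ≠ a) : f v ⊆ f x := by
  have hxadj (w : V) : T.Adj x w ↔ w = a := adj_iff_eq_of_neighborSet_eq_singleton hx
  have hxa : T.Adj x a := (hxadj a).mpr rfl
  have hua : u ≠ a := by
    rintro rfl
    exact ((hf x u hxa.ne).mp hxa).2.2 hux.subset
  obtain ⟨p, hp⟩ := hT.preconnected.exists_isPath u v
  have hxp : x ∉ p.support := fun hmem =>
    (hp.eq_start_or_eq_end_of_neighbors_eq hmem fun n _ hn => (hxadj n).mp hn).elim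
      hu.symm hvx.symm
  have hap : a ∉ p.support := by
    refine fun hmem => (hp.eq_start_or_eq_end_of_neighbors_eq hmem
      (c := c) fun n hn han => ?_).elim hua.symm hva.symm
    rcases ha han with rfl | rfl
    · exact absurd hn hxp
    · rfl
  refine hf.subset_of_walk p (fun w hw => ⟨ne_of_mem_of_not_mem hw hxp, fun hxw => ?_⟩)
    hux.subset
  exact hap ((hxadj w).mp hxw ▸ hw)

end IsOverlapRep

theorem stmt_7 {V : Type*} (T : SimpleGraph V) (hT : T.IsTree)
    (hskel : ∀ x : V, (T.neighborSet x).ncard = 1 →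
      ∀ y : V, T.Adj x y → (T.neighborSet y).ncard = 2)
    (f : V → Finset ℕ) (hf : IsOverlapRep T f) :
    ∀ x y : V, (T.neighborSet x).ncard = 1 → (T.neighborSet y).ncard = 1 →
      (∃ u : V, u ≠ x ∧ f u ⊂ f x) → (∃ u : V, u ≠ y ∧ f u ⊂ f y) → x = y := by
  rintro x y hx hy ⟨u, hux, hu⟩ ⟨w, hwy, hw⟩
  by_contra! hxy
  obtain ⟨a, hxa⟩ := Set.ncard_eq_one.mp hx
  obtain ⟨b, hyb⟩ := Set.ncard_eq_one.mp hy
  have hadj_xa : T.Adj x a := (adj_iff_eq_of_neighborSet_eq_singleton hxa).mpr rfl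
  have hadj_yb : T.Adj y b := (adj_iff_eq_of_neighborSet_eq_singleton hyb).mpr rfl
  have hdeg_a := hskel x hx a hadj_xa
  have hdeg_b := hskel y hy b hadj_yb
  obtain ⟨c, hac⟩ := Set.exists_eq_pair_of_ncard_eq_two hdeg_a hadj_xa.symm
  obtain ⟨d, hbd⟩ := Set.exists_eq_pair_of_ncard_eq_two hdeg_b hadj_yb.symm
  have hya : y ≠ a := by rintro rfl; omega
  have hxb : x ≠ b := by rintro rfl; omega
  have hyx : f y ⊆ f x := hf.subset_of_ssubset_leaf hT.connected hxa hac.subset hux hu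
    (Ne.symm hxy) hya
  have hxy' : f x ⊆ f y := hf.subset_of_ssubset_leaf hT.connected hyb hbd.subset hwy hw
    hxy hxb
  have hax : ¬ f a ⊆ f x := ((hf x a hadj_xa.ne).mp hadj_xa).2.2
  rcases eq_or_ne a b with rfl | hab
  · obtain rfl : y = c := (hac.subset hadj_yb.symm).resolve_left hxy.symm
    rcases hT.connected.eq_or_eq_or_eq_of_neighborSet_subset_pair hxa hyb hac.subset u with
      h | h | h
    · exact hux h
    · exact hax (h ▸ hu.subset)
    · exact hu.2 (h ▸ hxy')
  · exact hax ((hf.subset_of_ssubset_leaf hT.connected hyb hbd.subset hwy hw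
      (Ne.symm hya) hab).trans hyx)
end

section
/- Let G be a graph with minimum degree at least k (where k ≥ 2) and let F be a decomposition of G into pairwise edge-disjoint complete subgraphs, each with at most k vertices, whose union covers all edges. Then G has a pure overlap representation of size |F|; in particular, if δ(G) ≥ 2, then Φ(G) ≤ |E(G)|. -/
/-!
Send each vertex to the set of (indices of) the cliques of the decomposition that contain it.
Two vertices share a clique exactly when they are adjacent, so intersection encodes adjacency.
A clique through `w` has at most `k - 1` other vertices while `w` has at least `k` neighbours,
so some edge at `w` leaves that clique and `w` lies in a second clique. If the set of `u` were
contained in that of `v`, then `u` and `v` would share two distinct cliques, contradicting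
edge-disjointness. The edge set itself is a decomposition into cliques of size two, which gives
the bound on the pure overlap number.
-/

open Finset

lemma Finset.injOn_idxOf_toList {α : Type*} [DecidableEq α] (s : Finset α) :
    Set.InjOn s.toList.idxOf s := fun _ hx _ _ h =>
  (List.idxOf_inj (mem_toList.mpr hx)).mp h

lemma Sym2.card_toFinset_le_two {α : Type*} [DecidableEq α] (z : Sym2 α) : #z.toFinset ≤ 2 := by
  rw [Sym2.card_toFinset]
  split_ifs <;> omega

namespace SimpleGraph

variable {V : Type*} {G : SimpleGraph V}

def IsCliqueDecomposition (G : SimpleGraph V) (F : Finset (Finset V)) : Prop :=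
  (∀ c ∈ F, G.IsClique (c : Set V)) ∧ ∀ u v, G.Adj u v → ∃! c, c ∈ F ∧ u ∈ c ∧ v ∈ c

lemma exists_adj_notMem_of_card_le [DecidableEq V] {w : V} {c : Finset V} (hw : w ∈ c)
    (hc : #c ≤ (G.neighborSet w).ncard) : ∃ x, G.Adj w x ∧ x ∉ c := by
  by_contra! h
  have hsub : G.neighborSet w ⊆ ↑(c.erase w) := fun x hx =>
    mem_erase.mpr ⟨(G.ne_of_adj hx).symm, h x hx⟩
  have hle := Set.ncard_le_ncard hsub (c.erase w).finite_toSet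
  rw [Set.ncard_coe_finset, card_erase_of_mem hw] at hle
  have : 0 < #c := card_pos.mpr ⟨w, hw⟩
  omega

namespace IsCliqueDecomposition

variable {F : Finset (Finset V)}

lemma adj_of_mem (hF : G.IsCliqueDecomposition F) {c : Finset V} (hc : c ∈ F) {u v : V}
    (hu : u ∈ c) (hv : v ∈ c) (huv : u ≠ v) : G.Adj u v :=
  hF.1 c hc hu hv huv

lemma eq_of_mem (hF : G.IsCliqueDecomposition F) {c d : Finset V} (hc : c ∈ F) (hd : d ∈ F)
    {u v : V} (huc : u ∈ c) (hvc : v ∈ c) (hud : u ∈ d) (hvd : v ∈ d) (huv : u ≠ v) :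
    c = d :=
  (hF.2 u v (hF.adj_of_mem hc huc hvc huv)).unique ⟨hc, huc, hvc⟩ ⟨hd, hud, hvd⟩

lemma exists_ne_mem_mem [DecidableEq V] (hF : G.IsCliqueDecomposition F) {w : V}
    (hw : (G.neighborSet w).Nonempty) (hcard : ∀ c ∈ F, #c ≤ (G.neighborSet w).ncard) :
    ∃ c ∈ F, ∃ d ∈ F, c ≠ d ∧ w ∈ c ∧ w ∈ d := by
  obtain ⟨y, hy⟩ := hw
  obtain ⟨c, ⟨hc, hwc, -⟩, -⟩ := hF.2 w y hy
  obtain ⟨x, hx, hxc⟩ := exists_adj_notMem_of_card_le hwc (hcard c hc)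
  obtain ⟨d, ⟨hd, hwd, hxd⟩, -⟩ := hF.2 w x hx
  exact ⟨c, hc, d, hd, fun h => hxc (h ▸ hxd), hwc, hwd⟩

end IsCliqueDecomposition

section CliqueIndexRep

variable [DecidableEq V]

noncomputable def cliqueIndexRep (F : Finset (Finset V)) (v : V) : Finset ℕ :=
  {c ∈ F | v ∈ c}.image F.toList.idxOf

variable {F : Finset (Finset V)}

lemma mem_cliqueIndexRep {v : V} {n : ℕ} :
    n ∈ cliqueIndexRep F v ↔ ∃ c ∈ F, v ∈ c ∧ F.toList.idxOf c = n := by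
  simp [cliqueIndexRep, and_assoc]

lemma idxOf_mem_cliqueIndexRep_iff {v : V} {c : Finset V} (hc : c ∈ F) :
    F.toList.idxOf c ∈ cliqueIndexRep F v ↔ v ∈ c := by
  rw [mem_cliqueIndexRep]
  constructor
  · rintro ⟨d, hd, hvd, h⟩
    rwa [← F.injOn_idxOf_toList hd hc h]
  · exact fun hv => ⟨c, hc, hv, rfl⟩

lemma cliqueIndexRep_inter_nonempty_iff {u v : V} :
    (cliqueIndexRep F u ∩ cliqueIndexRep F v).Nonempty ↔ ∃ c ∈ F, u ∈ c ∧ v ∈ c := by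
  constructor
  · rintro ⟨n, hn⟩
    obtain ⟨c, hc, huc, rfl⟩ := mem_cliqueIndexRep.mp (mem_inter.mp hn).1
    exact ⟨c, hc, huc, (idxOf_mem_cliqueIndexRep_iff hc).mp (mem_inter.mp hn).2⟩
  · rintro ⟨c, hc, huc, hvc⟩
    exact ⟨_, mem_inter.mpr ⟨(idxOf_mem_cliqueIndexRep_iff hc).mpr huc,
      (idxOf_mem_cliqueIndexRep_iff hc).mpr hvc⟩⟩

lemma cliqueIndexRep_subset_iff {u v : V} :
    cliqueIndexRep F u ⊆ cliqueIndexRep F v ↔ ∀ c ∈ F, u ∈ c → v ∈ c := by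
  constructor
  · intro h c hc huc
    exact (idxOf_mem_cliqueIndexRep_iff hc).mp (h ((idxOf_mem_cliqueIndexRep_iff hc).mpr huc))
  · intro h n hn
    obtain ⟨c, hc, huc, rfl⟩ := mem_cliqueIndexRep.mp hn
    exact (idxOf_mem_cliqueIndexRep_iff hc).mpr (h c hc huc)

lemma repSize_cliqueIndexRep_le : repSize (cliqueIndexRep F) ≤ #F := by
  have hsub : (⋃ v, (cliqueIndexRep F v : Set ℕ)) ⊆ ↑(range #F) := by
    simp only [Set.iUnion_subset_iff, coe_subset]
    intro v n hn
    obtain ⟨c, hc, -, rfl⟩ := mem_cliqueIndexRep.mp hn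
    simpa [← length_toList] using List.idxOf_lt_length_iff.mpr (mem_toList.mpr hc)
  calc repSize (cliqueIndexRep F) ≤ (↑(range #F) : Set ℕ).ncard :=
        Set.ncard_le_ncard hsub (finite_toSet _)
    _ = #F := by rw [Set.ncard_coe_finset, card_range]

lemma IsCliqueDecomposition.isPureOverlapRep_cliqueIndexRep (hF : G.IsCliqueDecomposition F)
    (htwo : ∀ w, ∃ c ∈ F, ∃ d ∈ F, c ≠ d ∧ w ∈ c ∧ w ∈ d) :
    IsPureOverlapRep G (cliqueIndexRep F) := by
  refine ⟨fun u v huv => ?_, fun u v huv hsub => ?_⟩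
  · rw [cliqueIndexRep_inter_nonempty_iff]
    refine ⟨fun h => ?_, fun ⟨c, hc, huc, hvc⟩ => hF.adj_of_mem hc huc hvc huv⟩
    obtain ⟨c, ⟨hc, huc, hvc⟩, -⟩ := hF.2 u v h
    exact ⟨c, hc, huc, hvc⟩
  · obtain ⟨c, hc, d, hd, hcd, huc, hud⟩ := htwo u
    have hv := cliqueIndexRep_subset_iff.mp hsub
    exact hcd (hF.eq_of_mem hc hd huc (hv c hc huc) hud (hv d hd hud) huv)

end CliqueIndexRep

lemma IsCliqueDecomposition.exists_isPureOverlapRep {F : Finset (Finset V)}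
    (hF : G.IsCliqueDecomposition F) {k : ℕ} (hk : 0 < k)
    (hδ : ∀ v, k ≤ (G.neighborSet v).ncard) (hcard : ∀ c ∈ F, #c ≤ k) :
    ∃ f : V → Finset ℕ, IsPureOverlapRep G f ∧ repSize f ≤ #F := by
  classical
  refine ⟨cliqueIndexRep F, hF.isPureOverlapRep_cliqueIndexRep fun w => ?_,
    repSize_cliqueIndexRep_le⟩
  exact hF.exists_ne_mem_mem (Set.nonempty_of_ncard_ne_zero (by have := hδ w; omega))
    fun c hc => (hcard c hc).trans (hδ w)

lemma isCliqueDecomposition_image_toFinset_edgeFinset [DecidableEq V] [Fintype G.edgeSet] :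
    G.IsCliqueDecomposition (G.edgeFinset.image Sym2.toFinset) := by
  simp only [IsCliqueDecomposition, mem_image, mem_edgeFinset, forall_exists_index, and_imp,
    forall_apply_eq_imp_iff₂]
  refine ⟨fun e he x hx y hy hxy => ?_, fun u v huv => ⟨s(u, v).toFinset, ?_, ?_⟩⟩
  · rwa [(Sym2.mem_and_mem_iff hxy).mp ⟨Sym2.mem_toFinset.mp hx, Sym2.mem_toFinset.mp hy⟩] at he
  · exact ⟨⟨s(u, v), huv, rfl⟩, Sym2.mem_toFinset.mpr (Sym2.mem_mk_left u v),
      Sym2.mem_toFinset.mpr (Sym2.mem_mk_right u v)⟩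
  · rintro _ ⟨⟨e, he, rfl⟩, hu, hv⟩
    rw [(Sym2.mem_and_mem_iff huv.ne).mp ⟨Sym2.mem_toFinset.mp hu, Sym2.mem_toFinset.mp hv⟩]

lemma pureOverlapNumber_le_ncard_edgeSet [Finite V] (hδ : ∀ v, 2 ≤ (G.neighborSet v).ncard) :
    pureOverlapNumber G ≤ G.edgeSet.ncard := by
  classical
  have := Fintype.ofFinite V
  obtain ⟨f, hf, hsize⟩ := isCliqueDecomposition_image_toFinset_edgeFinset.exists_isPureOverlapRep
    two_pos hδ fun c hc => by
      obtain ⟨e, -, rfl⟩ := mem_image.mp hc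
      exact e.card_toFinset_le_two
  calc pureOverlapNumber G ≤ repSize f := Nat.sInf_le ⟨f, hf, rfl⟩
    _ ≤ #(G.edgeFinset.image Sym2.toFinset) := hsize
    _ ≤ #G.edgeFinset := card_image_le
    _ = G.edgeSet.ncard := by rw [← Set.ncard_coe_finset, coe_edgeFinset]

end SimpleGraph

theorem stmt_8 {V : Type*} [Fintype V] (G : SimpleGraph V) (k : ℕ) (hk : 2 ≤ k)
    (hδ : ∀ v : V, k ≤ (G.neighborSet v).ncard)
    (F : Finset (Finset V))
    (hclique : ∀ c ∈ F, G.IsClique (c : Set V) ∧ c.card ≤ k)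
    (hdecomp : ∀ u v : V, G.Adj u v → ∃! c, c ∈ F ∧ u ∈ c ∧ v ∈ c) :
    (∃ f : V → Finset ℕ, IsPureOverlapRep G f ∧ repSize f ≤ F.card) ∧
    (∀ (H : SimpleGraph V), (∀ v : V, 2 ≤ (H.neighborSet v).ncard) →
      pureOverlapNumber H ≤ H.edgeSet.ncard) := by
  have hF : G.IsCliqueDecomposition F := ⟨fun c hc => (hclique c hc).1, hdecomp⟩
  exact ⟨hF.exists_isPureOverlapRep (by omega) hδ fun c hc => (hclique c hc).2,
    fun _ => SimpleGraph.pureOverlapNumber_le_ncard_edgeSet⟩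
end

section
/- If G is triangle-free, then Φ(G) ≥ |E(G)|; moreover if additionally δ(G) ≥ 2, then Φ(G) = |E(G)|. -/
/-!
For an element `x` of an intersection representation, the vertices whose sets contain `x` form a
clique, which in a triangle-free graph contains at most one edge. Choosing a common element of the
two endpoint sets of each edge is therefore injective, so every representation has size at least
`|E(G)|`. Conversely, giving each vertex its set of incident edges represents `G` with exactly
`|E(G)|` elements, and when every vertex has two neighbours no such set contains another. In
general, adding the loop `s(v, v)` to the set of `v` as a private element gives some pure overlap
representation, so `Φ(G)` is the infimum of a nonempty set.
-/

theorem pureOverlapNumber_le_repSize {V : Type*} {G : SimpleGraph V} {f : V → Finset ℕ}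
    (hf : IsPureOverlapRep G f) : pureOverlapNumber G ≤ repSize f :=
  Nat.sInf_le ⟨f, hf, rfl⟩

theorem isPureOverlapRep_image {V α : Type*} [DecidableEq α] {G : SimpleGraph V}
    {g : V → Finset α} (hadj : ∀ u v, u ≠ v → (G.Adj u v ↔ (g u ∩ g v).Nonempty))
    (hsub : ∀ u v, u ≠ v → ¬ g u ⊆ g v) {enc : α → ℕ} (henc : Function.Injective enc) :
    IsPureOverlapRep G fun v => (g v).image enc :=
  ⟨fun u v huv => by rw [← Finset.image_inter _ _ henc, Finset.image_nonempty]; exact hadj u v huv,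
    fun u v huv => by rw [Finset.image_subset_image_iff henc]; exact hsub u v huv⟩

theorem repSize_image {V α : Type*} {g : V → Finset α} {enc : α → ℕ}
    (henc : Function.Injective enc) :
    repSize (fun v => (g v).image enc) = (⋃ v, (g v : Set α)).ncard := by
  simp only [repSize, Finset.coe_image, ← Set.image_iUnion]
  exact Set.ncard_image_of_injective _ henc

namespace SimpleGraph

variable {V : Type*}

theorem mem_of_isClique_of_cliqueFree {G : SimpleGraph V} (hG : G.CliqueFree 3) {s : Set V}
    (hs : G.IsClique s) {e : Sym2 V} (he : e ∈ G.edgeSet) (hes : ∀ v ∈ e, v ∈ s)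
    {v : V} (hv : v ∈ s) : v ∈ e := by
  classical
  induction e using Sym2.ind with | _ a b => ?_
  simp only [Sym2.mem_iff, forall_eq_or_imp, forall_eq] at hes ⊢
  by_contra! hne
  exact hG {a, b, v} (is3Clique_triple_iff.2
    ⟨he, hs hes.1 hv (Ne.symm hne.1), hs hes.2 hv (Ne.symm hne.2)⟩)

theorem eq_of_isClique_of_cliqueFree {G : SimpleGraph V} (hG : G.CliqueFree 3) {s : Set V}
    (hs : G.IsClique s) {e e' : Sym2 V} (he : e ∈ G.edgeSet) (he' : e' ∈ G.edgeSet)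
    (hes : ∀ v ∈ e, v ∈ s) (hes' : ∀ v ∈ e', v ∈ s) : e = e' :=
  Sym2.ext fun v => ⟨fun hv => mem_of_isClique_of_cliqueFree hG hs he' hes' (hes v hv),
    fun hv => mem_of_isClique_of_cliqueFree hG hs he hes (hes' v hv)⟩

variable (G : SimpleGraph V)

theorem edgeSet_ncard_le_repSize [Finite V] (hG : G.CliqueFree 3) {f : V → Finset ℕ}
    (hf : ∀ u v, u ≠ v → (G.Adj u v ↔ (f u ∩ f v).Nonempty)) :
    G.edgeSet.ncard ≤ repSize f := by
  have hwitness : ∀ e ∈ G.edgeSet, ∃ x, ∀ v ∈ e, x ∈ f v := by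
    intro e he
    induction e using Sym2.ind with | _ a b => ?_
    obtain ⟨x, hx⟩ := (hf a b (G.ne_of_adj he)).1 he
    rw [Finset.mem_inter] at hx
    exact ⟨x, by simpa only [Sym2.mem_iff, forall_eq_or_imp, forall_eq] using hx⟩
  choose! w hw using hwitness
  have hclique : ∀ x, G.IsClique {v | x ∈ f v} := fun x u hu v hv huv =>
    (hf u v huv).2 ⟨x, Finset.mem_inter.2 ⟨hu, hv⟩⟩
  refine Set.ncard_le_ncard_of_injOn w (fun e he => ?_) (fun e he e' he' hww => ?_)
    (Set.finite_iUnion fun v => (f v).finite_toSet)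
  · exact Set.mem_iUnion.2 ⟨_, hw e he _ (Sym2.out_fst_mem e)⟩
  · exact eq_of_isClique_of_cliqueFree hG (hclique (w e)) he he' (hw e he) (hww ▸ hw e' he')

section Incidence

variable [DecidableEq V] [G.LocallyFinite]

theorem incidenceFinset_inter_nonempty_iff {u v : V} (huv : u ≠ v) :
    (G.incidenceFinset u ∩ G.incidenceFinset v).Nonempty ↔ G.Adj u v := by
  rw [← Finset.coe_nonempty, Finset.coe_inter, coe_incidenceFinset, coe_incidenceFinset]
  by_cases hadj : G.Adj u v
  · simp [G.incidenceSet_inter_incidenceSet_of_adj hadj, hadj]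
  · simp [G.incidenceSet_inter_incidenceSet_of_not_adj hadj huv, hadj]

theorem incidenceFinset_not_subset {u v w : V} (huv : u ≠ v) (huw : G.Adj u w) (hwv : w ≠ v) :
    ¬ G.incidenceFinset u ⊆ G.incidenceFinset v := fun hsub => by
  have hv := ((G.mem_incidenceFinset _ _).1 (hsub ((G.mem_incidenceFinset _ _).2
    ((G.mem_incidenceSet u w).2 huw)))).2
  rcases Sym2.mem_iff.1 hv with h | h
  exacts [huv h.symm, hwv h.symm]

theorem mk_self_notMem_insert_incidenceFinset {u v : V} (huv : u ≠ v) :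
    s(u, u) ∉ insert s(v, v) (G.incidenceFinset v) := by
  simp [mem_incidenceFinset, incidenceSet, huv]

end Incidence

variable [Finite V]

theorem exists_isPureOverlapRep : ∃ f, IsPureOverlapRep G f := by
  classical
  have := Fintype.ofFinite V
  obtain ⟨enc, henc⟩ := Countable.exists_injective_nat (Sym2 V)
  refine ⟨_, isPureOverlapRep_image (g := fun v => insert s(v, v) (G.incidenceFinset v))
    (fun u v huv => ?_) (fun u v huv hsub => ?_) henc⟩
  · rw [Finset.insert_inter_of_notMem (G.mk_self_notMem_insert_incidenceFinset huv),
      Finset.inter_insert_of_notMem fun h => G.mk_self_notMem_insert_incidenceFinset huv.symm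
        (Finset.mem_insert_of_mem h), G.incidenceFinset_inter_nonempty_iff huv]
  · exact G.mk_self_notMem_insert_incidenceFinset huv (hsub (Finset.mem_insert_self _ _))

theorem edgeSet_ncard_le_pureOverlapNumber (hG : G.CliqueFree 3) :
    G.edgeSet.ncard ≤ pureOverlapNumber G := by
  obtain ⟨f, hf⟩ := G.exists_isPureOverlapRep
  exact le_csInf ⟨_, f, hf, rfl⟩ fun _ ⟨f, hf, hn⟩ => hn ▸ G.edgeSet_ncard_le_repSize hG hf.1

theorem pureOverlapNumber_le_edgeSet_ncard (hδ : ∀ v, 2 ≤ (G.neighborSet v).ncard) :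
    pureOverlapNumber G ≤ G.edgeSet.ncard := by
  classical
  have := Fintype.ofFinite V
  obtain ⟨enc, henc⟩ := Countable.exists_injective_nat (Sym2 V)
  have hrep : IsPureOverlapRep G fun v => (G.incidenceFinset v).image enc := by
    refine isPureOverlapRep_image (fun u v huv => (G.incidenceFinset_inter_nonempty_iff huv).symm)
      (fun u v huv => ?_) henc
    obtain ⟨w, huw, hwv⟩ := Set.exists_ne_of_one_lt_ncard (hδ u) v
    exact G.incidenceFinset_not_subset huv huw hwv
  calc pureOverlapNumber G ≤ repSize _ := pureOverlapNumber_le_repSize hrep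
    _ = G.edgeSet.ncard := by simp_rw [repSize_image henc, coe_incidenceFinset, iUnion_incidenceSet]

end SimpleGraph

theorem stmt_9 {V : Type*} [Fintype V] (G : SimpleGraph V) (hfree : G.CliqueFree 3) :
    G.edgeSet.ncard ≤ pureOverlapNumber G ∧
    ((∀ v : V, 2 ≤ (G.neighborSet v).ncard) → pureOverlapNumber G = G.edgeSet.ncard) :=
  ⟨G.edgeSet_ncard_le_pureOverlapNumber hfree,
    fun hδ => (G.pureOverlapNumber_le_edgeSet_ncard hδ).antisymm
      (G.edgeSet_ncard_le_pureOverlapNumber hfree)⟩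
end

section
/- For n ≥ 3, the n-book B_n (the union of n−2 triangles sharing a common edge) has overlap number φ(B_n) = 3. -/
/-- The `n`-book: two "hub" vertices adjacent to everything, forming `n - 2`
triangles sharing a common edge. -/
def book (n : ℕ) : SimpleGraph (Fin n) :=
  SimpleGraph.fromRel (fun u v => (u : ℕ) < 2 ∨ (v : ℕ) < 2)

lemma Finset.three_le_card_union_of_overlap {α : Type*} [DecidableEq α] {s t : Finset α}
    (hst : (s ∩ t).Nonempty) (hs : ¬ s ⊆ t) (ht : ¬ t ⊆ s) : 3 ≤ (s ∪ t).card := by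
  have hs_diff : (s \ t).Nonempty := Finset.sdiff_nonempty.mpr hs
  have ht_diff : (t \ s).Nonempty := Finset.sdiff_nonempty.mpr ht
  have hts : (t ∩ s).Nonempty := Finset.inter_comm s t ▸ hst
  calc 3 ≤ (s \ t).card + ((t \ s).card + (t ∩ s).card) := by
        have := hs_diff.card_pos; have := ht_diff.card_pos; have := hts.card_pos; omega
    _ = (s ∪ t).card := by
        rw [Finset.card_sdiff_add_card_inter, Finset.card_sdiff_add_card]

section OverlapNumber

variable {V : Type*} {G : SimpleGraph V}

lemma overlapNumber_le_repSize {f : V → Finset ℕ} (hf : IsOverlapRep G f) :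
    overlapNumber G ≤ repSize f :=
  Nat.sInf_le ⟨f, hf, rfl⟩

lemma IsOverlapRep.three_le_repSize [Finite V] {f : V → Finset ℕ} (hf : IsOverlapRep G f)
    {u v : V} (huv : G.Adj u v) : 3 ≤ repSize f := by
  classical
  obtain ⟨hinter, hu, hv⟩ := (hf u v huv.ne).mp huv
  have hsub : ((f u ∪ f v : Finset ℕ) : Set ℕ) ⊆ ⋃ w, (f w : Set ℕ) := by
    rw [Finset.coe_union]
    exact Set.union_subset (Set.subset_iUnion (fun w => (f w : Set ℕ)) u)
      (Set.subset_iUnion (fun w => (f w : Set ℕ)) v)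
  calc 3 ≤ (f u ∪ f v).card := Finset.three_le_card_union_of_overlap hinter hu hv
    _ = ((f u ∪ f v : Finset ℕ) : Set ℕ).ncard := (Set.ncard_coe_finset _).symm
    _ ≤ repSize f := Set.ncard_le_ncard hsub (Set.finite_iUnion fun w => (f w).finite_toSet)

lemma three_le_overlapNumber [Finite V] (hG : ∃ f, IsOverlapRep G f) {u v : V}
    (huv : G.Adj u v) : 3 ≤ overlapNumber G := by
  obtain ⟨f, hf⟩ := hG
  refine le_csInf ⟨_, f, hf, rfl⟩ ?_
  rintro _ ⟨g, hg, rfl⟩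
  exact hg.three_le_repSize huv

end OverlapNumber

lemma book_adj {n : ℕ} {u v : Fin n} :
    (book n).Adj u v ↔ u ≠ v ∧ ((u : ℕ) < 2 ∨ (v : ℕ) < 2) := by
  simp only [book, SimpleGraph.fromRel_adj]
  tauto

def bookRep (n : ℕ) (w : Fin n) : Finset ℕ :=
  if (w : ℕ) = 0 then {0, 1} else if (w : ℕ) = 1 then {1, 2} else {0, 2}

lemma bookRep_cases {n : ℕ} (w : Fin n) :
    ((w : ℕ) = 0 ∧ bookRep n w = {0, 1}) ∨ ((w : ℕ) = 1 ∧ bookRep n w = {1, 2}) ∨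
      (2 ≤ (w : ℕ) ∧ bookRep n w = {0, 2}) := by
  unfold bookRep
  split_ifs with h0 h1
  · exact Or.inl ⟨h0, rfl⟩
  · exact Or.inr (Or.inl ⟨h1, rfl⟩)
  · exact Or.inr (Or.inr ⟨by omega, rfl⟩)

lemma isOverlapRep_bookRep (n : ℕ) : IsOverlapRep (book n) (bookRep n) := by
  intro u v huv
  have hne : (u : ℕ) ≠ v := Fin.val_ne_of_ne huv
  rw [book_adj, and_iff_right huv]
  rcases bookRep_cases u with ⟨hu, hfu⟩ | ⟨hu, hfu⟩ | ⟨hu, hfu⟩ <;>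
    rcases bookRep_cases v with ⟨hv, hfv⟩ | ⟨hv, hfv⟩ | ⟨hv, hfv⟩ <;>
    rw [hfu, hfv] <;>
    first
    | exact iff_of_true (by omega) (by decide)
    | exact iff_of_false (by omega) (by decide)

lemma repSize_bookRep_le (n : ℕ) : repSize (bookRep n) ≤ 3 := by
  have hsub : (⋃ w, (bookRep n w : Set ℕ)) ⊆ (({0, 1, 2} : Finset ℕ) : Set ℕ) := by
    refine Set.iUnion_subset fun w => Finset.coe_subset.mpr ?_
    unfold bookRep
    split_ifs <;> decide
  exact (Set.ncard_le_ncard hsub (Finset.finite_toSet _)).trans_eq (Set.ncard_coe_finset _)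

theorem stmt_12 (n : ℕ) (hn : 3 ≤ n) : overlapNumber (book n) = 3 := by
  have hubs_adj : (book n).Adj ⟨0, by omega⟩ ⟨1, by omega⟩ := book_adj.mpr ⟨by simp, by simp⟩
  exact le_antisymm ((overlapNumber_le_repSize (isOverlapRep_bookRep n)).trans
      (repSize_bookRep_le n))
    (three_le_overlapNumber ⟨_, isOverlapRep_bookRep n⟩ hubs_adj)
end

section
/- Let f be an overlap representation of a connected graph G that has no star-cutset. Then any two vertices that are both nonminimal in f (each assigned a set properly containing some other assigned set) are adjacent. -/
/-- `G` has a star-cutset: a set `S` containing a vertex adjacent to all the rest of `S`,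
whose removal disconnects `G`. -/
def HasStarCutset {V : Type*} (G : SimpleGraph V) : Prop :=
  ∃ S : Set V, (∃ x ∈ S, ∀ y ∈ S, y ≠ x → G.Adj x y) ∧
    ¬ (G.induce (Sᶜ)).Preconnected

/-!
If `f x ⊊ f u`, then the closed neighbourhood of `u` is a star set, so without star-cutsets
the rest of `G` is connected. Within that rest, being represented by a proper subset of `f u`
spreads along edges: a neighbour `c` of such a vertex meets `f u` and cannot contain it, so,
not overlapping `f u`, it must lie strictly inside it. Hence every other vertex non-adjacent to
`u` is strictly below `u`; two nonminimal non-adjacent vertices would be strictly below each other.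
-/

theorem SimpleGraph.Reachable.of_adj_closed {V : Type*} {G : SimpleGraph V} {p : V → Prop}
    {u v : V} (h : G.Reachable u v) (hp : ∀ a b, G.Adj a b → p a → p b) (hu : p u) : p v := by
  rw [SimpleGraph.reachable_iff_reflTransGen] at h
  induction h with
  | refl => exact hu
  | tail _ hbc ih => exact hp _ _ hbc ih

theorem preconnected_induce_compl_insert_neighborSet {V : Type*} {G : SimpleGraph V}
    (hsc : ¬ HasStarCutset G) (u : V) :
    (G.induce (insert u (G.neighborSet u))ᶜ).Preconnected := by
  by_contra h
  exact hsc ⟨_, ⟨u, Set.mem_insert u _, fun y hy hyu => hy.resolve_left hyu⟩, h⟩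

namespace IsOverlapRep

variable {V : Type*} {G : SimpleGraph V} {f : V → Finset ℕ}

theorem not_adj_of_ssubset (hf : IsOverlapRep G f) {u x : V} (hx : f x ⊂ f u) :
    ¬ G.Adj u x := fun h => ((hf u x h.ne).mp h).2.2 hx.subset

theorem ssubset_of_adj_of_not_adj (hf : IsOverlapRep G f) {u w c : V} (hw : f w ⊂ f u)
    (hwc : G.Adj w c) (hcu : c ≠ u) (hnadj : ¬ G.Adj u c) : f c ⊂ f u := by
  obtain ⟨⟨t, ht⟩, hwc_sub, -⟩ := (hf w c hwc.ne).mp hwc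
  have hmeet : (f u ∩ f c).Nonempty :=
    ⟨t, Finset.mem_inter.mpr ⟨hw.subset (Finset.mem_inter.mp ht).1, (Finset.mem_inter.mp ht).2⟩⟩
  have hnsup : ¬ f u ⊆ f c := fun h => hwc_sub (hw.subset.trans h)
  have hsub : f c ⊆ f u := by
    by_contra hnsub
    exact hnadj ((hf u c hcu.symm).mpr ⟨hmeet, hnsup, hnsub⟩)
  exact Finset.ssubset_iff_subset_ne.mpr ⟨hsub, fun h => hnsup h.ge⟩

theorem ssubset_of_not_adj (hf : IsOverlapRep G f) (hsc : ¬ HasStarCutset G) {u v x : V}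
    (hx : f x ⊂ f u) (hvu : v ≠ u) (hnadj : ¬ G.Adj u v) : f v ⊂ f u := by
  set N := insert u (G.neighborSet u)
  have hxN : x ∉ N := by
    rintro (rfl | h)
    exacts [hx.ne rfl, hf.not_adj_of_ssubset hx h]
  have hvN : v ∉ N := by
    rintro (h | h)
    exacts [hvu h, hnadj h]
  have hreach := preconnected_induce_compl_insert_neighborSet hsc u ⟨x, hxN⟩ ⟨v, hvN⟩
  refine hreach.of_adj_closed (p := fun w : ↥Nᶜ => f w ⊂ f u) ?_ hx
  intro a c hac ha
  exact hf.ssubset_of_adj_of_not_adj ha hac (fun h => c.2 (Or.inl h)) (fun h => c.2 (Or.inr h))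

end IsOverlapRep

theorem stmt_14_general {V : Type*} (G : SimpleGraph V)
    (hsc : ¬ HasStarCutset G) (f : V → Finset ℕ) (hf : IsOverlapRep G f) :
    ∀ u v : V, u ≠ v → (∃ x : V, x ≠ u ∧ f x ⊂ f u) → (∃ x : V, x ≠ v ∧ f x ⊂ f v) →
      G.Adj u v := by
  rintro u v huv ⟨x, -, hx⟩ ⟨y, -, hy⟩
  by_contra hnadj
  have hvu : f v ⊂ f u := hf.ssubset_of_not_adj hsc hx huv.symm hnadj
  have huv' : f u ⊂ f v := hf.ssubset_of_not_adj hsc hy huv (fun h => hnadj h.symm)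
  exact hvu.asymm huv'

theorem stmt_14 {V : Type*} (G : SimpleGraph V) (hconn : G.Connected)
    (hsc : ¬ HasStarCutset G) (f : V → Finset ℕ) (hf : IsOverlapRep G f) :
    ∀ u v : V, u ≠ v → (∃ x : V, x ≠ u ∧ f x ⊂ f u) → (∃ x : V, x ≠ v ∧ f x ⊂ f v) →
      G.Adj u v :=
  stmt_14_general G hsc f hf
end

section
/- If G is an n-vertex triangle-free graph without a star-cutset and with two distinct vertices u, v satisfying N(u) = N(v), then G = K_{2,n−2} with n ≤ 4. -/
/-!
If `N(u) = N(v)`, then `{u} ∪ N(u)` is a star containing `N(v)`, so `v` is isolated once it is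
removed; without star-cutsets nothing else can remain, i.e. `V = {u, v} ∪ N(u)`. As `G` is
triangle-free, `N(u)` is independent, so `G` is complete bipartite with parts `{u, v}` and `N(u)`.
Finally, three vertices `a, b, c ∈ N(u)` are impossible: removing the star `{a, u, v}` isolates `b`
from `c`.
-/

namespace SimpleGraph

variable {V : Type*} {G : SimpleGraph V}

lemma hasStarCutset_of_neighborSet_subset {S : Set V} {c x y : V} (hc : c ∈ S)
    (hstar : ∀ z ∈ S, z ≠ c → G.Adj c z) (hx : x ∉ S) (hy : y ∉ S) (hxy : x ≠ y)
    (hN : G.neighborSet x ⊆ S) : HasStarCutset G := by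
  refine ⟨S, ⟨c, hc, hstar⟩, fun hpre => ?_⟩
  obtain ⟨p⟩ := hpre ⟨x, hx⟩ ⟨y, hy⟩
  match p with
  | .nil => exact hxy rfl
  | .cons (v := z) hadj _ => exact z.2 (hN hadj)

lemma adj_of_neighborSet_eq {u v a : V} (h : G.neighborSet u = G.neighborSet v)
    (ha : G.Adj u a) : G.Adj v a :=
  (h ▸ ha : a ∈ G.neighborSet v)

lemma not_adj_of_neighborSet_eq {u v : V} (h : G.neighborSet u = G.neighborSet v) :
    ¬ G.Adj u v := fun huv => G.irrefl (adj_of_neighborSet_eq h huv)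

lemma eq_or_eq_or_adj_of_neighborSet_eq {u v : V} (hsc : ¬ HasStarCutset G) (huv : u ≠ v)
    (hnbr : G.neighborSet u = G.neighborSet v) (w : V) : w = u ∨ w = v ∨ G.Adj u w := by
  by_contra! hw
  obtain ⟨hwu, hwv, hw⟩ := hw
  refine hsc (hasStarCutset_of_neighborSet_subset (S := insert u (G.neighborSet u)) (c := u)
    (Set.mem_insert _ _) ?_ (x := v) ?_ (y := w) ?_ hwv.symm ?_)
  · rintro z (rfl | hz) hzu
    exacts [absurd rfl hzu, hz]
  · simp [huv.symm, not_adj_of_neighborSet_eq hnbr]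
  · simp [hwu, hw]
  · exact hnbr ▸ Set.subset_insert _ _

lemma adj_iff_of_neighborSet_eq {u v : V} (hfree : G.CliqueFree 3) (hsc : ¬ HasStarCutset G)
    (huv : u ≠ v) (hnbr : G.neighborSet u = G.neighborSet v) (x y : V) :
    G.Adj x y ↔ (x ∈ ({u, v} : Set V) ↔ y ∉ ({u, v} : Set V)) := by
  have hcover := eq_or_eq_or_adj_of_neighborSet_eq hsc huv hnbr
  have hind : ∀ {a b}, G.Adj u a → G.Adj u b → ¬ G.Adj a b := fun ha hb hab =>
    isIndepSet_neighborSet_of_triangleFree G hfree u ha hb hab.ne hab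
  have hnuv := not_adj_of_neighborSet_eq hnbr
  have hvadj : ∀ {a}, G.Adj u a → G.Adj v a := adj_of_neighborSet_eq hnbr
  rcases hcover x with rfl | rfl | hx <;> rcases hcover y with rfl | rfl | hy
  all_goals grind [adj_comm, SimpleGraph.irrefl]

lemma degree_le_two_of_neighborSet_eq {u v : V} [Fintype (G.neighborSet u)]
    (hfree : G.CliqueFree 3) (hsc : ¬ HasStarCutset G) (huv : u ≠ v)
    (hnbr : G.neighborSet u = G.neighborSet v) : G.degree u ≤ 2 := by
  by_contra! h
  rw [← card_neighborFinset_eq_degree] at h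
  obtain ⟨a, b, c, ha, hb, hc, hab, hac, hbc⟩ := Finset.two_lt_card_iff.1 h
  simp only [mem_neighborFinset] at ha hb hc
  have hcover := eq_or_eq_or_adj_of_neighborSet_eq hsc huv hnbr
  have hnuv := not_adj_of_neighborSet_eq hnbr
  have hout : ∀ {z}, G.Adj u z → z ≠ a → z ∉ ({a, u, v} : Set V) := fun hz hza => by
    simp only [Set.mem_insert_iff, Set.mem_singleton_iff, not_or]
    exact ⟨hza, hz.ne', fun h => hnuv (h ▸ hz)⟩
  -- `{a, u, v}` is a star centred at `a`, and `b` can only be adjacent to `u` and `v`.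
  refine hsc (hasStarCutset_of_neighborSet_subset (S := {a, u, v}) (c := a) (by simp) ?_
    (hout hb (Ne.symm hab)) (hout hc (Ne.symm hac)) hbc ?_)
  · have hva := adj_of_neighborSet_eq hnbr ha
    rintro z (rfl | rfl | rfl) hz
    exacts [absurd rfl hz, ha.symm, hva.symm]
  · intro w hw
    rcases hcover w with rfl | rfl | hw'
    · simp
    · simp
    · exact absurd hw (isIndepSet_neighborSet_of_triangleFree G hfree u hb hw' hw.ne)

def completeBipartiteGraphIsoOfAdjIff (s : Set V) [DecidablePred (· ∈ s)]
    (h : ∀ x y, G.Adj x y ↔ (x ∈ s ↔ y ∉ s)) : completeBipartiteGraph s ↥sᶜ ≃g G where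
  toEquiv := Equiv.Set.sumCompl s
  map_rel_iff' := by
    rintro (⟨x, hx⟩ | ⟨x, hx : x ∉ s⟩) (⟨y, hy⟩ | ⟨y, hy : y ∉ s⟩) <;> simp [h, hx, hy]

end SimpleGraph

theorem stmt_15 {V : Type*} [Fintype V] (G : SimpleGraph V)
    (hfree : G.CliqueFree 3) (hsc : ¬ HasStarCutset G)
    (u v : V) (huv : u ≠ v) (hnbr : G.neighborSet u = G.neighborSet v) :
    Fintype.card V ≤ 4 ∧
    Nonempty (G ≃g completeBipartiteGraph (Fin 2) (Fin (Fintype.card V - 2))) := by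
  classical
  set s : Set V := {u, v}
  have hadj := SimpleGraph.adj_iff_of_neighborSet_eq hfree hsc huv hnbr
  have hs : Fintype.card s = 2 := by simp [s, huv]
  have hcompl : sᶜ = G.neighborSet u := Set.ext fun y => by simpa [s] using (hadj u y).symm
  have hdeg : Fintype.card ↥sᶜ = G.degree u := by
    rw [← G.card_neighborSet_eq_degree]
    exact Fintype.card_congr (Equiv.setCongr hcompl)
  have hcard : Fintype.card V = 2 + G.degree u := by
    rw [← hs, ← hdeg, ← Fintype.card_sum]
    exact (Fintype.card_congr (Equiv.Set.sumCompl s)).symm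
  have hdeg_le := SimpleGraph.degree_le_two_of_neighborSet_eq hfree hsc huv hnbr
  refine ⟨by omega, ⟨?_⟩⟩
  exact (SimpleGraph.completeBipartiteGraphIsoOfAdjIff s hadj).symm.trans
    (SimpleGraph.completeBipartiteGraphCongr (Fintype.equivFinOfCardEq hs)
      (Fintype.equivFinOfCardEq (by omega)))
end

section
/- If G is a triangle-free graph with no star-cutset, then every overlap representation of G has size at least |E(G)| − 1, i.e., φ(G) ≥ |E(G)| − 1. -/
/-!
Call `c` a center of `f` if `f x ⊆ f c` for every non-neighbour `x` of `c`. Without a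
star-cutset, `f u ⊆ f w` forces `w` to be a center: the non-neighbours of `w` induce a
connected subgraph, and containment in `f w` propagates along its edges because `f w` and the
set of a neighbour must then be nested. So non-centers with intersecting sets are adjacent.

If `f` is injective, centers are pairwise adjacent, so by triangle-freeness at most one edge
joins two centers, and every other edge gets an element of the union as a label; each label
determines its edge. If `f u = f v` for some `u ≠ v`, then `G` is a subgraph of `K_{2,2}`,
while a single edge already forces three elements.
-/

section

open Function SimpleGraph

namespace SimpleGraph

theorem Preconnected.induction_on_adj {W : Type*} {H : SimpleGraph W} (hH : H.Preconnected)
    {P : W → Prop} (hP : ∀ a b, H.Adj a b → P a → P b) {a : W} (ha : P a) (b : W) :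
    P b := by
  obtain ⟨p⟩ := hH a b
  induction p with
  | nil => exact ha
  | cons hab _ ih => exact ih (hP _ _ hab ha)

variable {V : Type*} {G : SimpleGraph V}

theorem IsClique.edge_eq_of_cliqueFree_three (hfree : G.CliqueFree 3) {s : Set V}
    (hs : G.IsClique s) {e e' : Sym2 V} (he : e ∈ G.edgeSet) (he' : e' ∈ G.edgeSet)
    (hes : ∀ x ∈ e, x ∈ s) (hes' : ∀ x ∈ e', x ∈ s) : e = e' := by
  classical
  induction e with | h u v => ?_
  induction e' with | h u' v' => ?_
  have hu : u ∈ s := hes u (Sym2.mem_mk_left u v)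
  have hv : v ∈ s := hes v (Sym2.mem_mk_right u v)
  have hs_uv : ∀ w ∈ s, w = u ∨ w = v := by
    intro w hw
    by_contra! hne
    exact hfree {u, v, w}
      (is3Clique_triple_iff.2 ⟨he, hs hu hw hne.1.symm, hs hv hw hne.2.symm⟩)
  have hu' := hs_uv u' (hes' u' (Sym2.mem_mk_left u' v'))
  have hv' := hs_uv v' (hes' v' (Sym2.mem_mk_right u' v'))
  have hne : u' ≠ v' := he'.ne
  rcases hu' with rfl | rfl <;> rcases hv' with rfl | rfl
  · exact absurd rfl hne
  · rfl
  · exact Sym2.eq_swap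
  · exact absurd rfl hne

end SimpleGraph

variable {V : Type*} {G : SimpleGraph V} {f : V → Finset ℕ}

theorem propagate_of_not_hasStarCutset (hsc : ¬ HasStarCutset G) {S : Set V} {x : V}
    (hx : x ∈ S) (hS : ∀ y ∈ S, y ≠ x → G.Adj x y) {P : V → Prop}
    (hP : ∀ a b, a ∉ S → b ∉ S → G.Adj a b → P a → P b) {a b : V} (ha : a ∉ S)
    (hb : b ∉ S) (hPa : P a) : P b := by
  have hpre : (G.induce Sᶜ).Preconnected := by_contra fun h => hsc ⟨S, ⟨x, hx, hS⟩, h⟩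
  exact hpre.induction_on_adj (P := fun c => P c) (fun c d hcd => hP c d c.2 d.2 hcd)
    (a := ⟨a, ha⟩) hPa ⟨b, hb⟩

def IsCenter (G : SimpleGraph V) (f : V → Finset ℕ) (c : V) : Prop :=
  ∀ x, x ≠ c → ¬ G.Adj c x → f x ⊆ f c

theorem IsCenter.adj_of_mem_of_notMem {c x : V} {α : ℕ} (hc : IsCenter G f c) (hx : α ∈ f x)
    (hc' : α ∉ f c) : G.Adj c x := by
  by_contra h
  exact hc' (hc x (by rintro rfl; exact hc' hx) h hx)

theorem IsCenter.adj_of_injective (hf : Injective f) {c c' : V} (hc : IsCenter G f c)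
    (hc' : IsCenter G f c') (hne : c ≠ c') : G.Adj c c' := by
  by_contra h
  exact hne (hf ((hc' c hne fun h' => h h'.symm).antisymm (hc c' hne.symm h)))

/-- An edge `uv` with `u` not a center lies in `labelClique G f α` iff `α ∈ f u ∩ f v`
when `v` is not a center, and `α ∈ f u \ f v` when it is. -/
def labelClique (G : SimpleGraph V) (f : V → Finset ℕ) (α : ℕ) : Set V :=
  {x | α ∈ f x ↔ ¬ IsCenter G f x}

namespace IsOverlapRep

theorem not_adj_of_subset (hrep : IsOverlapRep G f) {u v : V} (huv : u ≠ v) (h : f u ⊆ f v) :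
    ¬ G.Adj u v :=
  fun hadj => ((hrep u v huv).1 hadj).2.1 h

theorem subset_or_subset_of_not_adj (hrep : IsOverlapRep G f) {u v : V} (huv : u ≠ v)
    (h : ¬ G.Adj u v) (hmeet : (f u ∩ f v).Nonempty) : f u ⊆ f v ∨ f v ⊆ f u := by
  rw [hrep u v huv] at h
  tauto

theorem isCenter_of_subset (hrep : IsOverlapRep G f) (hsc : ¬ HasStarCutset G) {u w : V}
    (huw : u ≠ w) (h : f u ⊆ f w) : IsCenter G f w := by
  intro x hxw hx
  have hS : ∀ y, y ∉ insert w (G.neighborSet w) ↔ y ≠ w ∧ ¬ G.Adj w y := by simp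
  refine propagate_of_not_hasStarCutset (S := insert w (G.neighborSet w))
    (P := fun y => f y ⊆ f w) hsc (Set.mem_insert w _)
    (fun y hy hyw => hy.resolve_left hyw) ?_
    ((hS u).2 ⟨huw, fun h' => hrep.not_adj_of_subset huw h h'.symm⟩) ((hS x).2 ⟨hxw, hx⟩) h
  intro a b _ hb hab ha
  rw [hS] at hb
  obtain ⟨⟨t, ht⟩, hab', -⟩ := (hrep a b hab.ne).1 hab
  rw [Finset.mem_inter] at ht
  rcases hrep.subset_or_subset_of_not_adj hb.1 (fun h => hb.2 h.symm)
    ⟨t, Finset.mem_inter.2 ⟨ht.2, ha ht.1⟩⟩ with h | h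
  · exact h
  · exact absurd (ha.trans h) hab'

theorem adj_of_mem_of_mem (hrep : IsOverlapRep G f) (hsc : ¬ HasStarCutset G) {x y : V} {α : ℕ}
    (hxy : x ≠ y) (hx : ¬ IsCenter G f x) (hy : ¬ IsCenter G f y) (hαx : α ∈ f x)
    (hαy : α ∈ f y) : G.Adj x y := by
  by_contra h
  rcases hrep.subset_or_subset_of_not_adj hxy h ⟨α, Finset.mem_inter.2 ⟨hαx, hαy⟩⟩
    with hs | hs
  · exact hy (hrep.isCenter_of_subset hsc hxy hs)
  · exact hx (hrep.isCenter_of_subset hsc hxy.symm hs)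

theorem isClique_labelClique (hrep : IsOverlapRep G f) (hsc : ¬ HasStarCutset G)
    (hf : Injective f) (α : ℕ) : G.IsClique (labelClique G f α) := by
  intro x hx y hy hxy
  simp only [labelClique, Set.mem_ofPred_eq] at hx hy
  by_cases hcx : IsCenter G f x <;> by_cases hcy : IsCenter G f y
  · exact hcx.adj_of_injective hf hcy hxy
  · exact hcx.adj_of_mem_of_notMem (hy.2 hcy) fun h => hx.1 h hcx
  · exact (hcy.adj_of_mem_of_notMem (hx.2 hcx) fun h => hy.1 h hcy).symm
  · exact hrep.adj_of_mem_of_mem hsc hxy hcx hcy (hx.2 hcx) (hy.2 hcy)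

theorem exists_mem_labelClique (hrep : IsOverlapRep G f) {u v : V} (huv : G.Adj u v)
    (hu : ¬ IsCenter G f u) :
    ∃ α ∈ f u, u ∈ labelClique G f α ∧ v ∈ labelClique G f α := by
  obtain ⟨⟨α, hα⟩, hsub, -⟩ := (hrep u v huv.ne).1 huv
  rw [Finset.mem_inter] at hα
  by_cases hv : IsCenter G f v
  · obtain ⟨β, hβu, hβv⟩ := Finset.not_subset.1 hsub
    exact ⟨β, hβu, by simp [labelClique, hβu, hu], by simp [labelClique, hβv, hv]⟩
  · exact ⟨α, hα.1, by simp [labelClique, hα.1, hu], by simp [labelClique, hα.2, hv]⟩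

theorem ncard_edgeSet_le_repSize_add_one [Finite V] (hrep : IsOverlapRep G f)
    (hfree : G.CliqueFree 3) (hsc : ¬ HasStarCutset G) (hf : Injective f) :
    G.edgeSet.ncard ≤ repSize f + 1 := by
  set U := ⋃ v, (f v : Set ℕ)
  set centerEdges := {e ∈ G.edgeSet | ∀ x ∈ e, IsCenter G f x}
  have hcenter : centerEdges.ncard ≤ 1 :=
    (Set.ncard_le_one).2 fun e he e' he' =>
      IsClique.edge_eq_of_cliqueFree_three hfree (s := {c | IsCenter G f c})
        (fun _ hc _ hc' hne => IsCenter.adj_of_injective hf hc hc' hne) he.1 he'.1 he.2 he'.2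
  have hlabel :
      ∀ e ∈ G.edgeSet \ centerEdges, ∃ α ∈ U, ∀ x ∈ e, x ∈ labelClique G f α := by
    rintro e ⟨he, hnc⟩
    induction e with | h u v => ?_
    have hnc : ¬ (IsCenter G f u ∧ IsCenter G f v) := by simpa [centerEdges, he] using hnc
    by_cases hu : IsCenter G f u
    · obtain ⟨α, hα, hvα, huα⟩ :=
        hrep.exists_mem_labelClique (G.adj_symm he) (hnc ⟨hu, ·⟩)
      exact ⟨α, Set.mem_iUnion_of_mem v hα, by simp [huα, hvα]⟩
    · obtain ⟨α, hα, huα, hvα⟩ := hrep.exists_mem_labelClique he hu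
      exact ⟨α, Set.mem_iUnion_of_mem u hα, by simp [huα, hvα]⟩
  choose! label hlabelU hlabel using hlabel
  have hinj : Set.InjOn label (G.edgeSet \ centerEdges) := fun e he e' he' h =>
    (hrep.isClique_labelClique hsc hf _).edge_eq_of_cliqueFree_three hfree he.1 he'.1
      (hlabel e he) (h ▸ hlabel e' he')
  calc G.edgeSet.ncard ≤ (G.edgeSet \ centerEdges).ncard + centerEdges.ncard :=
        Set.ncard_le_ncard_sdiff_add_ncard _ _
    _ ≤ U.ncard + 1 := add_le_add
        (Set.ncard_le_ncard_of_injOn label hlabelU hinj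
          (Set.finite_iUnion fun v => (f v).finite_toSet)) hcenter

theorem adj_iff_adj_of_eq (hrep : IsOverlapRep G f) {u v z : V} (huv : f u = f v) (hzu : z ≠ u)
    (hzv : z ≠ v) : G.Adj u z ↔ G.Adj v z := by
  rw [hrep u z hzu.symm, hrep v z hzv.symm, huv]

theorem adj_of_eq (hrep : IsOverlapRep G f) (hsc : ¬ HasStarCutset G) {u v z : V} (hne : u ≠ v)
    (huv : f u = f v) (hzu : z ≠ u) (hzv : z ≠ v) : G.Adj u z := by
  by_contra hz
  have hS : ∀ y, y ∉ insert u (G.neighborSet u) ↔ y ≠ u ∧ ¬ G.Adj u y := by simp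
  refine hzv (propagate_of_not_hasStarCutset (S := insert u (G.neighborSet u))
    (P := fun y => y = v) hsc (Set.mem_insert u _) (fun y hy hyu => hy.resolve_left hyu) ?_
    ((hS v).2 ⟨hne.symm, hrep.not_adj_of_subset hne huv.le⟩) ((hS z).2 ⟨hzu, hz⟩) rfl)
  rintro a b - hb hab rfl
  have hb := (hS b).1 hb
  exact absurd ((hrep.adj_iff_adj_of_eq huv hb.1 hab.ne').2 hab) hb.2

theorem ncard_neighborSet_le_two [Finite V] (hrep : IsOverlapRep G f) (hfree : G.CliqueFree 3)
    (hsc : ¬ HasStarCutset G) {u v : V} (hne : u ≠ v) (huv : f u = f v) :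
    (G.neighborSet u).ncard ≤ 2 := by
  classical
  by_contra! h
  obtain ⟨a, b, c, ha, hb, hc, hab, hac, hbc⟩ := (Set.two_lt_ncard_iff (Set.toFinite _)).1 h
  simp only [mem_neighborSet] at ha hb hc
  have hnv : ∀ {z}, G.Adj u z → z ≠ v := fun hz hzv =>
    hrep.not_adj_of_subset hne huv.le (hzv ▸ hz)
  have hS : ∀ {z}, G.Adj u z → z ≠ a → z ∉ ({a, u, v} : Set V) := fun hz hza => by
    simp [hza, hz.ne', hnv hz]
  refine hbc (propagate_of_not_hasStarCutset (S := {a, u, v}) (P := fun y => b = y) hsc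
    (Set.mem_insert a _) ?_ ?_ (hS hb hab.symm) (hS hc hac.symm) rfl)
  · rintro y (rfl | rfl | rfl) hya
    · exact absurd rfl hya
    · exact ha.symm
    · exact ((hrep.adj_iff_adj_of_eq huv ha.ne' (hnv ha)).1 ha).symm
  · rintro _ y - hy hby rfl
    have hyu : y ≠ u := fun h => hy (by simp [h])
    have hyv : y ≠ v := fun h => hy (by simp [h])
    exact (hfree _ (is3Clique_triple_iff.2
      ⟨hb, hrep.adj_of_eq hsc hne huv hyu hyv, hby⟩)).elim

theorem ncard_edgeSet_le_four [Finite V] (hrep : IsOverlapRep G f) (hfree : G.CliqueFree 3)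
    (hsc : ¬ HasStarCutset G) {u v : V} (hne : u ≠ v) (huv : f u = f v) :
    G.edgeSet.ncard ≤ 4 := by
  classical
  have hcover : G.edgeSet ⊆ G.incidenceSet u ∪ G.incidenceSet v := by
    intro e he
    induction e with | h p q => ?_
    have hpq : G.Adj p q := he
    by_contra h
    obtain ⟨⟨hup, huq⟩, hvp, hvq⟩ : (u ≠ p ∧ u ≠ q) ∧ v ≠ p ∧ v ≠ q := by
      simpa [mk'_mem_incidenceSet_iff, hpq] using h
    exact hfree _ (is3Clique_triple_iff.2 ⟨hrep.adj_of_eq hsc hne huv hup.symm hvp.symm,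
      hrep.adj_of_eq hsc hne huv huq.symm hvq.symm, hpq⟩)
  have hdeg : ∀ w, (G.incidenceSet w).ncard = (G.neighborSet w).ncard := fun w =>
    Set.ncard_congr' (G.incidenceSetEquivNeighborSet w)
  calc G.edgeSet.ncard ≤ (G.incidenceSet u ∪ G.incidenceSet v).ncard :=
        Set.ncard_le_ncard hcover
    _ ≤ (G.incidenceSet u).ncard + (G.incidenceSet v).ncard := Set.ncard_union_le _ _
    _ ≤ 2 + 2 := by
      rw [hdeg, hdeg]
      exact add_le_add (hrep.ncard_neighborSet_le_two hfree hsc hne huv)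
        (hrep.ncard_neighborSet_le_two hfree hsc hne.symm huv.symm)

theorem three_le_repSize_s16 [Finite V] (hrep : IsOverlapRep G f) {x y : V} (hxy : G.Adj x y) :
    3 ≤ repSize f := by
  obtain ⟨⟨a, ha⟩, hxy', hyx⟩ := (hrep x y hxy.ne).1 hxy
  obtain ⟨b, hbx, hby⟩ := Finset.not_subset.1 hxy'
  obtain ⟨c, hcy, hcx⟩ := Finset.not_subset.1 hyx
  rw [Finset.mem_inter] at ha
  exact (Set.two_lt_ncard (Set.finite_iUnion fun v => (f v).finite_toSet)).2
    ⟨a, Set.mem_iUnion_of_mem x ha.1, b, Set.mem_iUnion_of_mem x hbx,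
      c, Set.mem_iUnion_of_mem y hcy, by rintro rfl; exact hby ha.2,
      by rintro rfl; exact hcx ha.1, by rintro rfl; exact hcx hbx⟩

theorem ncard_edgeSet_sub_one_le_repSize [Finite V] (hrep : IsOverlapRep G f)
    (hfree : G.CliqueFree 3) (hsc : ¬ HasStarCutset G) : G.edgeSet.ncard - 1 ≤ repSize f := by
  by_cases hf : Injective f
  · have := hrep.ncard_edgeSet_le_repSize_add_one hfree hsc hf
    omega
  obtain ⟨u, v, huv, hne⟩ : ∃ u v, f u = f v ∧ u ≠ v := by simpa [Injective] using hf
  obtain hE | ⟨e, he⟩ := G.edgeSet.eq_empty_or_nonempty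
  · simp [hE]
  induction e with | h x y => ?_
  have := hrep.three_le_repSize_s16 he
  have := hrep.ncard_edgeSet_le_four hfree hsc hne huv
  omega

end IsOverlapRep

theorem exists_isOverlapRep [Finite V] (G : SimpleGraph V) : ∃ f, IsOverlapRep G f := by
  obtain ⟨ι, hι⟩ := Countable.exists_injective_nat (V ⊕ Sym2 V)
  let tokens (v : V) : Set (V ⊕ Sym2 V) := insert (.inl v) (.inr '' G.incidenceSet v)
  refine ⟨fun v => (Set.toFinite (ι '' tokens v)).toFinset, fun u v huv => ?_⟩
  rw [← Finset.coe_nonempty, Finset.coe_inter, ← Finset.coe_subset, ← Finset.coe_subset]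
  simp only [Set.Finite.coe_toFinset, ← Set.image_inter hι, Set.image_nonempty,
    Set.image_subset_image_iff hι]
  have htok : ∀ {w z}, Sum.inl w ∈ tokens z ↔ w = z := by simp [tokens]
  refine ⟨fun hadj => ⟨⟨.inr s(u, v), ?_⟩, fun h => huv (htok.1 (h (Set.mem_insert _ _))),
    fun h => huv.symm (htok.1 (h (Set.mem_insert _ _)))⟩, ?_⟩
  · simp [tokens, hadj, mk'_mem_incidenceSet_right_iff]
  rintro ⟨⟨x | e, hu, hv⟩, -⟩
  · exact absurd ((htok.1 hu).symm.trans (htok.1 hv)) huv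
  · simp only [tokens, Set.mem_insert_iff, reduceCtorEq, false_or, Set.mem_image,
      Sum.inr.injEq, exists_eq_right] at hu hv
    exact G.adj_of_mem_incidenceSet huv hu hv

theorem exists_isOverlapRep_repSize_eq_overlapNumber [Finite V] (G : SimpleGraph V) :
    ∃ f, IsOverlapRep G f ∧ repSize f = overlapNumber G := by
  obtain ⟨f₀, hf₀⟩ := exists_isOverlapRep G
  exact Nat.sInf_mem (s := {n | ∃ f, IsOverlapRep G f ∧ repSize f = n})
    ⟨repSize f₀, f₀, hf₀, rfl⟩

end

theorem stmt_16 {V : Type*} [Fintype V] (G : SimpleGraph V)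
    (hfree : G.CliqueFree 3) (hsc : ¬ HasStarCutset G) :
    (∀ f : V → Finset ℕ, IsOverlapRep G f → G.edgeSet.ncard - 1 ≤ repSize f) ∧
    G.edgeSet.ncard - 1 ≤ overlapNumber G := by
  have hbound : ∀ f : V → Finset ℕ, IsOverlapRep G f → G.edgeSet.ncard - 1 ≤ repSize f :=
    fun f hrep => hrep.ncard_edgeSet_sub_one_le_repSize hfree hsc
  obtain ⟨f, hrep, hsize⟩ := exists_isOverlapRep_repSize_eq_overlapNumber G
  exact ⟨hbound, hsize ▸ hbound f hrep⟩
end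

section
/- For n ≥ 2, the path P_n satisfies Φ(P_n) = n + 1, and for n ≥ 3, the cycle C_n satisfies Φ(C_n) = n. -/
/-!
Lower bounds. Let `f` be a pure overlap representation of `G` and `σ : V → V` a fixed-point-free
map such that every edge `uv` satisfies `σ u = v` or `σ v = u`. Choose `x v ∈ f v \ f (σ v)`,
possible since no set contains another. If `x u = x w` with `u ≠ w`, the sets `f u`, `f w`
meet, so `u w` is an edge and one of them is the `σ`-image of the other, contradicting the
choice of `x`. Hence `Φ(G) ≥ |V|`. Cycles admit such a `σ` (the rotation), and so do paths
(the shift, with the last vertex sent back to its neighbour). For the path, an element common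
to the sets of the last two vertices is distinct from all `x v`, which gives one more.

Upper bounds. The sets `{i, i + 1}` form a pure overlap representation of `P_n` on
`{0, …, n}`, and, read modulo `n`, one of `C_n` on `{0, …, n - 1}`.
-/

open Function

section PureOverlapRep

variable {V : Type*} {G : SimpleGraph V} {f : V → Finset ℕ}

theorem IsPureOverlapRep.sdiff_nonempty (hf : IsPureOverlapRep G f) {u v : V} (huv : u ≠ v) :
    (f u \ f v).Nonempty :=
  Finset.sdiff_nonempty.mpr (hf.2 u v huv)

theorem IsPureOverlapRep.adj_of_mem (hf : IsPureOverlapRep G f) {u v : V} (huv : u ≠ v)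
    {a : ℕ} (hu : a ∈ f u) (hv : a ∈ f v) : G.Adj u v :=
  (hf.1 u v huv).mpr ⟨a, Finset.mem_inter.mpr ⟨hu, hv⟩⟩

theorem IsPureOverlapRep.inter_nonempty (hf : IsPureOverlapRep G f) {u v : V} (h : G.Adj u v) :
    (f u ∩ f v).Nonempty :=
  (hf.1 u v h.ne).mp h

theorem card_le_repSize [Finite V] {s : Finset ℕ} (hs : ∀ a ∈ s, ∃ v, a ∈ f v) :
    s.card ≤ repSize f := by
  rw [← Set.ncard_coe_finset]
  refine Set.ncard_le_ncard (fun a ha => Set.mem_iUnion.mpr (hs a ha)) ?_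
  exact Set.finite_iUnion fun v => (f v).finite_toSet

theorem pureOverlapNumber_eq {m : ℕ} (h : ∃ f, IsPureOverlapRep G f ∧ repSize f = m)
    (hlower : ∀ f : V → Finset ℕ, IsPureOverlapRep G f → m ≤ repSize f) :
    pureOverlapNumber G = m :=
  le_antisymm (Nat.sInf_le h) (le_csInf ⟨m, h⟩ fun _ ⟨f, hf, hsize⟩ => hsize ▸ hlower f hf)

end PureOverlapRep

section Orientation

variable {V : Type*} {G : SimpleGraph V} {f : V → Finset ℕ} {σ : V → V} {x : V → ℕ}

theorem IsPureOverlapRep.exists_mem_sdiff (hf : IsPureOverlapRep G f) (hσ : ∀ v, σ v ≠ v) :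
    ∃ x : V → ℕ, ∀ v, x v ∈ f v ∧ x v ∉ f (σ v) := by
  choose x hx using fun v => hf.sdiff_nonempty (hσ v).symm
  exact ⟨x, fun v => Finset.mem_sdiff.mp (hx v)⟩

section Witnesses

variable (hf : IsPureOverlapRep G f) (hσG : ∀ u v, G.Adj u v → σ u = v ∨ σ v = u)
  (hx : ∀ v, x v ∈ f v ∧ x v ∉ f (σ v))
include hf hσG hx

theorem injective_of_mem_sdiff : Injective x := by
  intro u w hux
  by_contra huw
  have hw := hx w
  rw [← hux] at hw
  rcases hσG u w (hf.adj_of_mem huw (hx u).1 hw.1) with h | h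
  · exact (hx u).2 (h ▸ hw.1)
  · exact hw.2 (h ▸ (hx u).1)

-- A witness `x w ∈ f u ∩ f (σ u)` with `w ∉ {u, σ u}` would force `σ w = u` and `σ w = σ u`.
theorem notMem_range_of_mem_inter {u : V} (hσu : σ (σ u) = u) {a : ℕ} (hau : a ∈ f u)
    (haσ : a ∈ f (σ u)) : a ∉ Set.range x := by
  rintro ⟨w, rfl⟩
  by_cases hwu : w = u
  · exact (hx w).2 (hwu ▸ haσ)
  by_cases hwσ : w = σ u
  · subst hwσ
    exact (hx _).2 (by rwa [hσu])
  have hσw : σ w = u :=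
    (hσG w u (hf.adj_of_mem hwu (hx w).1 hau)).resolve_right fun h => hwσ h.symm
  have hσw' : σ w = σ u :=
    (hσG w (σ u) (hf.adj_of_mem hwσ (hx w).1 haσ)).resolve_right (by rw [hσu]; exact Ne.symm hwu)
  exact (hx u).2 (by rw [← hσw', hσw]; exact (hx u).1)

end Witnesses

variable [Fintype V]

theorem card_le_repSize_of_orientation (hf : IsPureOverlapRep G f) (hσ : ∀ v, σ v ≠ v)
    (hσG : ∀ u v, G.Adj u v → σ u = v ∨ σ v = u) : Fintype.card V ≤ repSize f := by
  obtain ⟨x, hx⟩ := hf.exists_mem_sdiff hσ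
  calc Fintype.card V = (Finset.univ.image x).card :=
        (Finset.card_image_of_injective _ (injective_of_mem_sdiff hf hσG hx)).symm
    _ ≤ repSize f := card_le_repSize (by simpa using fun v => ⟨v, (hx v).1⟩)

theorem card_add_one_le_repSize_of_orientation (hf : IsPureOverlapRep G f) (hσ : ∀ v, σ v ≠ v)
    (hσG : ∀ u v, G.Adj u v → σ u = v ∨ σ v = u) {u : V} (hu : G.Adj u (σ u))
    (hσu : σ (σ u) = u) : Fintype.card V + 1 ≤ repSize f := by
  obtain ⟨x, hx⟩ := hf.exists_mem_sdiff hσ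
  obtain ⟨a, ha⟩ := hf.inter_nonempty hu
  rw [Finset.mem_inter] at ha
  have hax : a ∉ Finset.univ.image x := by
    simpa using notMem_range_of_mem_inter hf hσG hx hσu ha.1 ha.2
  calc Fintype.card V + 1 = (insert a (Finset.univ.image x)).card := by
        rw [Finset.card_insert_of_notMem hax,
          Finset.card_image_of_injective _ (injective_of_mem_sdiff hf hσG hx), Finset.card_univ]
    _ ≤ repSize f := card_le_repSize (by simpa using ⟨⟨u, ha.1⟩, fun v => ⟨v, (hx v).1⟩⟩)

end Orientation

section PairRep

variable {V : Type*} {G : SimpleGraph V} {e s : V → ℕ}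

theorem isPureOverlapRep_pair (he : Injective e) (hs : Injective s)
    (hes : ∀ u v, s u = e v → s v ≠ e u)
    (hG : ∀ u v, u ≠ v → (G.Adj u v ↔ s u = e v ∨ s v = e u)) :
    IsPureOverlapRep G fun v => {e v, s v} := by
  refine ⟨fun u v huv => ?_, fun u v huv hsub => ?_⟩
  · rw [hG u v huv]
    constructor
    · rintro (h | h)
      · exact ⟨s u, by simp [h]⟩
      · exact ⟨e u, by simp [h]⟩
    · rintro ⟨a, ha⟩
      simp only [Finset.mem_inter, Finset.mem_insert, Finset.mem_singleton] at ha
      rcases ha with ⟨rfl | rfl, h | h⟩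
      · exact absurd h (he.ne huv)
      · exact Or.inr h.symm
      · exact Or.inl h
      · exact absurd h (hs.ne huv)
  · have heu := hsub (Finset.mem_insert_self _ _)
    have hsu := hsub (Finset.mem_insert_of_mem (Finset.mem_singleton_self _))
    simp only [Finset.mem_insert, Finset.mem_singleton, he.eq_iff, hs.eq_iff, huv,
      false_or, or_false] at heu hsu
    exact hes u v hsu heu.symm

theorem repSize_pair :
    repSize (fun v => ({e v, s v} : Finset ℕ)) = (Set.range e ∪ Set.range s).ncard := by
  rw [repSize]
  congr 1
  ext a
  simp [exists_or, eq_comm]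

end PairRep

open SimpleGraph

def pathOrientation (n : ℕ) (i : Fin n) : Fin n :=
  if h : i.val + 1 < n then ⟨i + 1, h⟩ else ⟨n - 2, by omega⟩

theorem pathOrientation_ne {n : ℕ} (hn : 2 ≤ n) (i : Fin n) : pathOrientation n i ≠ i := by
  unfold pathOrientation
  split_ifs <;> simp only [ne_eq, Fin.ext_iff] <;> omega

theorem pathOrientation_eq_or_eq_of_adj {n : ℕ} {u v : Fin n} (h : (pathGraph n).Adj u v) :
    pathOrientation n u = v ∨ pathOrientation n v = u := by
  rw [pathGraph_adj] at h
  rcases h with h | h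
  · left; simp [pathOrientation, h]
  · right; simp [pathOrientation, h]

theorem add_one_le_repSize_of_pathGraph {n : ℕ} (hn : 2 ≤ n) {f : Fin n → Finset ℕ}
    (hf : IsPureOverlapRep (pathGraph n) f) : n + 1 ≤ repSize f := by
  have hfwd : pathOrientation n ⟨n - 2, by omega⟩ = ⟨n - 1, by omega⟩ := by
    rw [pathOrientation, dif_pos (by dsimp only; omega), Fin.mk.injEq]
    dsimp only
    omega
  have hback : pathOrientation n ⟨n - 1, by omega⟩ = ⟨n - 2, by omega⟩ := by
    rw [pathOrientation, dif_neg (by dsimp only; omega)]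
  simpa using card_add_one_le_repSize_of_orientation hf (pathOrientation_ne hn)
    (fun _ _ => pathOrientation_eq_or_eq_of_adj) (u := ⟨n - 2, by omega⟩)
    (by simp only [hfwd, pathGraph_adj]; omega) (by rw [hfwd, hback])

theorem exists_isPureOverlapRep_pathGraph {n : ℕ} (hn : n ≠ 0) :
    ∃ f, IsPureOverlapRep (pathGraph n) f ∧ repSize f = n + 1 := by
  refine ⟨_, isPureOverlapRep_pair (e := Fin.val) (s := fun i => i.val + 1) Fin.val_injective
    (fun _ _ h => Fin.val_injective (Nat.succ_injective h)) (fun _ _ h h' => by omega)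
    (fun _ _ _ => pathGraph_adj), ?_⟩
  rw [repSize_pair, Fin.range_val, ← Set.ncard_Iio_nat (n + 1)]
  congr 1
  ext a
  simp only [Set.mem_union, Set.mem_Iio, Set.mem_range, Fin.exists_iff]
  constructor
  · rintro (h | ⟨i, hi, rfl⟩) <;> omega
  · intro ha
    rcases Nat.lt_or_ge a n with h | h
    · exact Or.inl h
    · exact Or.inr ⟨n - 1, by omega, by omega⟩

theorem pureOverlapNumber_pathGraph {n : ℕ} (hn : 2 ≤ n) :
    pureOverlapNumber (pathGraph n) = n + 1 :=
  pureOverlapNumber_eq (exists_isPureOverlapRep_pathGraph (by omega))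
    fun _ => add_one_le_repSize_of_pathGraph hn

theorem le_repSize_of_cycleGraph {n : ℕ} {f : Fin (n + 2) → Finset ℕ}
    (hf : IsPureOverlapRep (cycleGraph (n + 2)) f) : n + 2 ≤ repSize f := by
  have hσG (u v : Fin (n + 2)) (h : (cycleGraph (n + 2)).Adj u v) : u + 1 = v ∨ v + 1 = u := by
    rw [cycleGraph_adj, sub_eq_iff_eq_add', sub_eq_iff_eq_add'] at h
    exact h.symm.imp Eq.symm Eq.symm
  simpa using card_le_repSize_of_orientation hf (σ := (· + 1)) (fun _ => by simp) hσG

theorem exists_isPureOverlapRep_cycleGraph (n : ℕ) :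
    ∃ f, IsPureOverlapRep (cycleGraph (n + 3)) f ∧ repSize f = n + 3 := by
  refine ⟨_, isPureOverlapRep_pair (e := Fin.val) (s := fun i => (i + 1).val) Fin.val_injective
    (Fin.val_injective.comp (add_left_injective 1)) (fun u v h h' => ?_) (fun u v _ => ?_), ?_⟩
  · rw [Fin.val_inj] at h h'
    subst h
    rw [add_assoc, add_eq_left] at h'
    simp [Fin.ext_iff, Fin.val_add, Nat.mod_eq_of_lt (show 2 < n + 3 by omega)] at h'
  · rw [cycleGraph_adj, sub_eq_iff_eq_add', sub_eq_iff_eq_add', Fin.val_inj, Fin.val_inj]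
    tauto
  · have hs : Set.range (fun i : Fin (n + 3) => (i + 1).val) ⊆ Set.range Fin.val :=
      Set.range_subset_iff.mpr fun i => ⟨i + 1, rfl⟩
    rw [repSize_pair, Set.union_eq_left.mpr hs, Fin.range_val, Set.ncard_Iio_nat]

theorem pureOverlapNumber_cycleGraph {n : ℕ} (hn : 3 ≤ n) :
    pureOverlapNumber (cycleGraph n) = n := by
  obtain ⟨m, rfl⟩ : ∃ m, n = m + 3 := ⟨n - 3, by omega⟩
  exact pureOverlapNumber_eq (exists_isPureOverlapRep_cycleGraph m) fun _ => le_repSize_of_cycleGraph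

theorem stmt_18 :
    (∀ n : ℕ, 2 ≤ n → pureOverlapNumber (SimpleGraph.pathGraph n) = n + 1) ∧
    (∀ n : ℕ, 3 ≤ n → pureOverlapNumber (SimpleGraph.cycleGraph n) = n) :=
  ⟨fun _ => pureOverlapNumber_pathGraph, fun _ => pureOverlapNumber_cycleGraph⟩
end

section
/- For m ≥ 2, the star K_{1,m} satisfies Φ(K_{1,m}) = 2m. Also, for n ≥ 1 and k with C(2k−1, k) ≥ n, the complete graph satisfies Φ(K_n) ≤ 2k − 1. -/
/-!
In a pure overlap representation, the sets of an independent set are pairwise disjoint, and the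
set of a vertex with a neighbour `u` has at least two elements: one shared with `u`'s set and
one outside it. The `m` leaves of `K_{1,m}` therefore need `2m` points, which are enough:
the leaf `i` gets `{2i, 2i+1}` and the centre gets the even numbers below `2m`. For `K_n`, any
two distinct `k`-subsets of a `(2k-1)`-set intersect by pigeonhole, and none contains another.
-/

open Finset

section Representations

variable {V : Type*} {G : SimpleGraph V} {f : V → Finset ℕ}

lemma repSize_eq_card_biUnion [Fintype V] (f : V → Finset ℕ) :
    repSize f = #(univ.biUnion f) := by
  rw [repSize, ← Set.ncard_coe_finset, coe_biUnion]
  simp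

lemma repSize_le_card {S : Finset ℕ} (hS : ∀ v, f v ⊆ S) : repSize f ≤ #S := by
  rw [repSize, ← Set.ncard_coe_finset]
  exact Set.ncard_le_ncard (Set.iUnion_subset fun v => coe_subset.mpr (hS v)) S.finite_toSet

lemma pureOverlapNumber_le (hf : IsPureOverlapRep G f) : pureOverlapNumber G ≤ repSize f :=
  Nat.sInf_le ⟨f, hf, rfl⟩

lemma le_pureOverlapNumber {b : ℕ} (hG : ∃ f, IsPureOverlapRep G f)
    (hb : ∀ f, IsPureOverlapRep G f → b ≤ repSize f) : b ≤ pureOverlapNumber G := by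
  obtain ⟨f, hf, hsize⟩ := Nat.sInf_mem (s := {n | ∃ f, IsPureOverlapRep G f ∧ repSize f = n})
    (hG.elim fun g hg => ⟨_, g, hg, rfl⟩)
  exact (hb f hf).trans_eq hsize

lemma IsPureOverlapRep.disjoint (hf : IsPureOverlapRep G f) {u v : V} (huv : u ≠ v)
    (hadj : ¬ G.Adj u v) : Disjoint (f u) (f v) := by
  rw [disjoint_iff_inter_eq_empty, ← not_nonempty_iff_eq_empty]
  exact fun h => hadj ((hf.1 u v huv).mpr h)

lemma IsPureOverlapRep.two_le_card (hf : IsPureOverlapRep G f) {u v : V} (hadj : G.Adj u v) :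
    2 ≤ #(f u) := by
  obtain ⟨a, ha⟩ := (hf.1 u v hadj.ne).mp hadj
  obtain ⟨b, hbu, hbv⟩ := not_subset.mp (hf.2 u v hadj.ne)
  rw [mem_inter] at ha
  exact one_lt_card.mpr ⟨a, ha.1, b, hbu, fun hab => hbv (hab ▸ ha.2)⟩

lemma IsPureOverlapRep.two_mul_card_le_repSize [Fintype V] (hf : IsPureOverlapRep G f)
    {s : Finset V} (hs : G.IsIndepSet s) (hnbr : ∀ v ∈ s, ∃ u, G.Adj v u) :
    2 * #s ≤ repSize f := by
  classical
  have hdisj : (s : Set V).PairwiseDisjoint f := fun u hu v hv huv =>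
    hf.disjoint huv (hs hu hv huv)
  calc 2 * #s = ∑ _v ∈ s, 2 := by rw [sum_const, smul_eq_mul, mul_comm]
    _ ≤ ∑ v ∈ s, #(f v) := sum_le_sum fun v hv => (hnbr v hv).elim fun _ h => hf.two_le_card h
    _ = #(s.biUnion f) := (card_biUnion hdisj).symm
    _ ≤ repSize f := repSize_eq_card_biUnion f ▸ card_le_card (biUnion_subset_biUnion_of_subset_left
        f (subset_univ s))

end Representations

section Star

def starRep (m : ℕ) : Fin 1 ⊕ Fin m → Finset ℕ
  | .inl _ => (range (2 * m)).filter Even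
  | .inr i => {2 * (i : ℕ), 2 * (i : ℕ) + 1}

variable {m : ℕ}

lemma mem_starRep_inl {a : Fin 1} {x : ℕ} : x ∈ starRep m (.inl a) ↔ x % 2 = 0 ∧ x < 2 * m := by
  simp [starRep, Nat.even_iff, and_comm]

lemma mem_starRep_inr {i : Fin m} {x : ℕ} : x ∈ starRep m (.inr i) ↔ x / 2 = i := by
  simp only [starRep, mem_insert, mem_singleton]
  omega

lemma isPureOverlapRep_starRep (hm : 2 ≤ m) :
    IsPureOverlapRep (completeBipartiteGraph (Fin 1) (Fin m)) (starRep m) := by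
  refine ⟨?_, ?_⟩
  · rintro (a | i) (b | j) hne
    · exact absurd (congrArg Sum.inl (Subsingleton.elim a b)) hne
    · exact iff_of_true (by simp)
        ⟨2 * j, mem_inter.mpr ⟨mem_starRep_inl.mpr (by omega), mem_starRep_inr.mpr (by omega)⟩⟩
    · exact iff_of_true (by simp)
        ⟨2 * i, mem_inter.mpr ⟨mem_starRep_inr.mpr (by omega), mem_starRep_inl.mpr (by omega)⟩⟩
    · refine iff_of_false (by simp) ?_
      rintro ⟨x, hx⟩
      rw [mem_inter, mem_starRep_inr, mem_starRep_inr] at hx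
      exact hne (congrArg Sum.inr (Fin.ext (hx.1.symm.trans hx.2)))
  · rintro (a | i) (b | j) hne hsub
    · exact hne (congrArg Sum.inl (Subsingleton.elim a b))
    · have hcentre : ∀ x, x % 2 = 0 → x < 2 * m → x / 2 = j := fun x hx hxm =>
        mem_starRep_inr.mp (hsub (mem_starRep_inl.mpr ⟨hx, hxm⟩))
      have h0 := hcentre 0 rfl (by omega)
      have h2 := hcentre 2 rfl (by omega)
      omega
    · have hodd : (2 * (i : ℕ) + 1) / 2 = i := by omega
      have := mem_starRep_inl.mp (hsub (mem_starRep_inr.mpr hodd))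
      omega
    · have := mem_starRep_inr.mp (hsub (mem_starRep_inr.mpr (by omega : 2 * (i : ℕ) / 2 = i)))
      exact hne (congrArg Sum.inr (Fin.ext (by omega)))

lemma repSize_starRep : repSize (starRep m) = 2 * m := by
  suffices h : univ.biUnion (starRep m) = range (2 * m) by
    rw [repSize_eq_card_biUnion, h, card_range]
  ext x
  simp only [mem_biUnion, mem_univ, true_and, Sum.exists, mem_starRep_inl, mem_starRep_inr,
    mem_range]
  constructor
  · rintro (⟨_, -, hx⟩ | ⟨i, hi⟩)
    · exact hx
    · omega
  · exact fun hx => .inr ⟨⟨x / 2, by omega⟩, rfl⟩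

lemma IsPureOverlapRep.two_mul_le_repSize_star {f : Fin 1 ⊕ Fin m → Finset ℕ}
    (hf : IsPureOverlapRep (completeBipartiteGraph (Fin 1) (Fin m)) f) :
    2 * m ≤ repSize f := by
  simpa using hf.two_mul_card_le_repSize (s := univ.map .inr)
    (by simp [SimpleGraph.isIndepSet_iff, Set.Pairwise]) (by simp)

lemma pureOverlapNumber_star (hm : 2 ≤ m) :
    pureOverlapNumber (completeBipartiteGraph (Fin 1) (Fin m)) = 2 * m :=
  le_antisymm ((pureOverlapNumber_le (isPureOverlapRep_starRep hm)).trans_eq repSize_starRep)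
    (le_pureOverlapNumber ⟨_, isPureOverlapRep_starRep hm⟩
      fun _ hf => hf.two_mul_le_repSize_star)

end Star

section Complete

variable {V : Type*}

lemma isPureOverlapRep_top_of_injective {S : Finset ℕ} {k : ℕ} (hS : #S ≤ 2 * k - 1)
    {f : V → Finset ℕ} (hf : Function.Injective f) (hfS : ∀ v, f v ∈ powersetCard k S) :
    IsPureOverlapRep ⊤ f := by
  simp only [mem_powersetCard] at hfS
  refine ⟨fun u v huv => ?_, fun u v huv hsub => ?_⟩
  · have hk : k ≠ 0 := by
      rintro rfl
      exact huv (hf ((card_eq_zero.mp (hfS u).2).trans (card_eq_zero.mp (hfS v).2).symm))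
    refine iff_of_true huv (inter_nonempty_of_card_lt_card_add_card (hfS u).1 (hfS v).1 ?_)
    rw [(hfS u).2, (hfS v).2]
    omega
  · exact huv (hf (eq_of_subset_of_card_le hsub ((hfS v).2.trans (hfS u).2.symm).le))

lemma pureOverlapNumber_top_le [Fintype V] {k : ℕ} (hV : Fintype.card V ≤ (2 * k - 1).choose k) :
    pureOverlapNumber (⊤ : SimpleGraph V) ≤ 2 * k - 1 := by
  obtain ⟨e, he⟩ := Function.Embedding.exists_of_card_le_finset
    (s := powersetCard k (range (2 * k - 1))) (by rwa [card_powersetCard, card_range])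
  have hS : ∀ v, e v ∈ powersetCard k (range (2 * k - 1)) := fun v => he ⟨v, rfl⟩
  calc pureOverlapNumber ⊤
      ≤ repSize e := pureOverlapNumber_le
        (isPureOverlapRep_top_of_injective (card_range _).le e.injective hS)
    _ ≤ #(range (2 * k - 1)) := repSize_le_card fun v => (mem_powersetCard.mp (hS v)).1
    _ = 2 * k - 1 := card_range _

end Complete

theorem stmt_19 :
    (∀ m : ℕ, 2 ≤ m →
      pureOverlapNumber (completeBipartiteGraph (Fin 1) (Fin m)) = 2 * m) ∧
    (∀ n k : ℕ, 1 ≤ n → n ≤ Nat.choose (2 * k - 1) k →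
      pureOverlapNumber (⊤ : SimpleGraph (Fin n)) ≤ 2 * k - 1) :=
  ⟨fun _ => pureOverlapNumber_star,
    fun n _ _ hk => pureOverlapNumber_top_le (by rwa [Fintype.card_fin])⟩
end
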